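/- arXiv:2411.19516 — 11 statements merged into one kernel-verified Lean document; each statement's English description precedes it below -/
import Mathlib

section
/- The 4×3 matrix A with rows (1,1,0), (1,-1,0), (-1,0,1), (-1,0,-1) cannot be eliminated at any column; consequently A has no elimination ordering. -/
open Finset

/-- A matrix can be eliminated at column `j` if either every row with a positive
entry in column `j` vanishes outside column `j`, or every row with a negative
entry in column `j` vanishes outside column `j`. -/
def CanElim {m : ℕ} {ι : Type} (A : Matrix (Fin m) ι ℝ) (j : ι) : Prop :=
  (∀ i, 0 < A i j → ∀ j', j' ≠ j → A i j' = 0) ∨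
  (∀ i, A i j < 0 → ∀ j', j' ≠ j → A i j' = 0)

/-- The matrix obtained from `A` by zeroing out the columns in `J`. -/
def elimCols {m n : ℕ} (A : Matrix (Fin m) (Fin n) ℝ) (J : Finset (Fin n)) :
    Matrix (Fin m) (Fin n) ℝ :=
  fun i j => if j ∈ J then 0 else A i j

/-- `A` has an elimination ordering: an enumeration `σ 0, σ 1, …` of the columns such
that at each step, the matrix with the previously processed columns zeroed out can be
eliminated at the next column. -/
def HasEO {m n : ℕ} (A : Matrix (Fin m) (Fin n) ℝ) : Prop :=
  ∃ σ : Equiv.Perm (Fin n), ∀ t : Fin n,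
    CanElim (elimCols A ((Finset.univ.filter (fun t' => t' < t)).image σ)) (σ t)

/-- `x` has all coordinates in `D = {0,…,d}`. -/
def InD (d : ℕ) {ι : Type} (x : ι → ℤ) : Prop := ∀ j, 0 ≤ x j ∧ x j ≤ (d : ℤ)

/-- `x ∈ D^ι` is a feasible solution of the integer linear system `(A, b)`. -/
def Feas (d : ℕ) {m : ℕ} {ι : Type} [Fintype ι] (A : Matrix (Fin m) ι ℝ)
    (b : Fin m → ℝ) (x : ι → ℤ) : Prop :=
  InD d x ∧ ∀ i, b i ≤ ∑ j, A i j * (x j : ℝ)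

/-- Adjacency in the solution graph: both endpoints feasible and Hamming distance 1. -/
def SolStep (d : ℕ) {m : ℕ} {ι : Type} [Fintype ι] [DecidableEq ι]
    (A : Matrix (Fin m) ι ℝ) (b : Fin m → ℝ) (u v : ι → ℤ) : Prop :=
  Feas d A b u ∧ Feas d A b v ∧ hammingDist u v = 1

/-- The solution graph of `(A, b)` is connected. -/
def SolConnected (d : ℕ) {m : ℕ} {ι : Type} [Fintype ι] [DecidableEq ι]
    (A : Matrix (Fin m) ι ℝ) (b : Fin m → ℝ) : Prop :=
  ∀ x y, Feas d A b x → Feas d A b y → Relation.ReflTransGen (SolStep d A b) x y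

/-- The specific 4×3 matrix from the paper. -/
def A0 : Matrix (Fin 4) (Fin 3) ℝ :=
  !![1, 1, 0; 1, -1, 0; -1, 0, 1; -1, 0, -1]

lemma not_canElim_of_mixed_rows {m : ℕ} {ι : Type} {A : Matrix (Fin m) ι ℝ} {j : ι}
    {p q : Fin m} {k l : ι} (hpos : 0 < A p j) (hk : k ≠ j) (hp : A p k ≠ 0)
    (hneg : A q j < 0) (hl : l ≠ j) (hq : A q l ≠ 0) : ¬ CanElim A j := by
  rintro (h | h)
  · exact hp (h p hpos k hk)
  · exact hq (h q hneg l hl)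

lemma elimCols_empty {m n : ℕ} (A : Matrix (Fin m) (Fin n) ℝ) : elimCols A ∅ = A := by
  ext i j
  simp [elimCols]

lemma HasEO.exists_canElim {m n : ℕ} {A : Matrix (Fin m) (Fin n) ℝ} [NeZero n]
    (h : HasEO A) : ∃ j, CanElim A j := by
  obtain ⟨σ, hσ⟩ := h
  have hfirst := hσ 0
  rw [Finset.filter_false_of_mem (fun t _ => (Fin.zero_le t).not_gt), Finset.image_empty,
    elimCols_empty] at hfirst
  exact ⟨σ 0, hfirst⟩

lemma A0_not_canElim (j : Fin 3) : ¬ CanElim A0 j := by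
  fin_cases j
  · exact not_canElim_of_mixed_rows (p := 0) (k := 1) (q := 2) (l := 2)
      (by simp [A0]) (by decide) (by simp [A0]) (by simp [A0]) (by decide) (by simp [A0])
  · exact not_canElim_of_mixed_rows (p := 0) (k := 0) (q := 1) (l := 0)
      (by simp [A0]) (by decide) (by simp [A0]) (by simp [A0]) (by decide) (by simp [A0])
  · exact not_canElim_of_mixed_rows (p := 2) (k := 0) (q := 3) (l := 0)
      (by simp [A0]) (by decide) (by simp [A0]) (by simp [A0]) (by decide) (by simp [A0])

theorem stmt0 : (∀ j, ¬ CanElim A0 j) ∧ ¬ HasEO A0 :=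
  ⟨A0_not_canElim, fun h => h.exists_canElim.elim A0_not_canElim⟩
end

section
/- Let A be the 4×3 matrix with rows (1,1,0), (1,-1,0), (-1,0,1), (-1,0,-1), let d be a positive integer, D = {0,1,...,d}, and let b ∈ ℝ^4. Then for any s,t ∈ D^3 with As ≥ b, At ≥ b, and s_1 ≥ t_1, the vectors u¹ = (s_1,t_2,s_3) and u² = (t_1,t_2,s_3) also satisfy Au¹ ≥ b and Au² ≥ b. In particular the solution graph of (A,b) is connected. -/
/-!
In `A0` the rows with a positive entry in the first column involve besides it only `x 1`,
and the rows with a negative entry only `x 2`. Hence for feasible `s`, `t` and any `a`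
between `t 0` and `s 0`, the point `(a, t 1, s 2)` is feasible: the rows `+x 0 ± x 1` are
bounded below through `t`, the rows `-x 0 ± x 2` through `s`. Taking `a = s 0` and then
`a = t 0` gives the path `s → (s 0, t 1, s 2) → (t 0, t 1, s 2) → t`, changing one coordinate
at a time.
-/

open Finset

lemma hammingDist_le_one_of_eqOn_compl {ι β : Type*} [Fintype ι] [DecidableEq β]
    {u v : ι → β} (j : ι) (h : ∀ k, k ≠ j → u k = v k) : hammingDist u v ≤ 1 := by
  calc hammingDist u v ≤ #({j} : Finset ι) :=
        card_le_card fun k hk => mem_singleton.2 (not_imp_comm.1 (h k) (mem_filter.1 hk).2)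
    _ = 1 := card_singleton j

section SolutionGraph

variable {d m : ℕ} {ι : Type} [Fintype ι] [DecidableEq ι] {A : Matrix (Fin m) ι ℝ}
  {b : Fin m → ℝ}

instance : Std.Symm (SolStep d A b) where
  symm _ _ h := ⟨h.2.1, h.1, by rw [hammingDist_comm]; exact h.2.2⟩

lemma reflTransGen_solStep_of_eqOn_compl {u v : ι → ℤ} (hu : Feas d A b u) (hv : Feas d A b v)
    (j : ι) (h : ∀ k, k ≠ j → u k = v k) : Relation.ReflTransGen (SolStep d A b) u v := by
  rcases eq_or_ne u v with rfl | huv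
  · exact .refl
  · exact .single ⟨hu, hv, (hammingDist_le_one_of_eqOn_compl j h).antisymm
      (hammingDist_pos.2 huv)⟩

end SolutionGraph

lemma feas_A0_iff (d : ℕ) (b : Fin 4 → ℝ) (x : Fin 3 → ℤ) :
    Feas d A0 b x ↔ InD d x ∧
      b 0 ≤ (x 0 : ℝ) + x 1 ∧ b 1 ≤ (x 0 : ℝ) - x 1 ∧
      b 2 ≤ -(x 0 : ℝ) + x 2 ∧ b 3 ≤ -(x 0 : ℝ) - x 2 := by
  simp only [Feas, Fin.forall_fin_succ, Fin.sum_univ_three, A0]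
  simp [sub_eq_add_neg]

lemma feas_A0_of_mem_Icc {d : ℕ} {b : Fin 4 → ℝ} {s t : Fin 3 → ℤ} (hs : Feas d A0 b s)
    (ht : Feas d A0 b t) {a : ℤ} (hta : t 0 ≤ a) (has : a ≤ s 0) :
    Feas d A0 b ![a, t 1, s 2] := by
  rw [feas_A0_iff] at hs ht ⊢
  obtain ⟨hsD, hs0, hs1, hs2, hs3⟩ := hs
  obtain ⟨htD, ht0, ht1, ht2, ht3⟩ := ht
  have hta' : (t 0 : ℝ) ≤ a := by exact_mod_cast hta
  have has' : (a : ℝ) ≤ s 0 := by exact_mod_cast has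
  refine ⟨fun j => ?_, ?_, ?_, ?_, ?_⟩
  · fin_cases j
    · exact ⟨(htD 0).1.trans hta, has.trans (hsD 0).2⟩
    · exact htD 1
    · exact hsD 2
  all_goals simp only [Matrix.cons_val]; linarith

lemma reflTransGen_solStep_A0_of_le {d : ℕ} {b : Fin 4 → ℝ} {s t : Fin 3 → ℤ}
    (hs : Feas d A0 b s) (ht : Feas d A0 b t) (hts : t 0 ≤ s 0) :
    Relation.ReflTransGen (SolStep d A0 b) s t := by
  have hu₁ := feas_A0_of_mem_Icc hs ht hts le_rfl
  have hu₂ := feas_A0_of_mem_Icc hs ht le_rfl hts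
  have h₁ : Relation.ReflTransGen (SolStep d A0 b) s ![s 0, t 1, s 2] :=
    reflTransGen_solStep_of_eqOn_compl hs hu₁ 1 fun k hk => by fin_cases k <;> simp_all
  have h₂ : Relation.ReflTransGen (SolStep d A0 b) ![s 0, t 1, s 2] ![t 0, t 1, s 2] :=
    reflTransGen_solStep_of_eqOn_compl hu₁ hu₂ 0 fun k hk => by fin_cases k <;> simp_all
  have h₃ : Relation.ReflTransGen (SolStep d A0 b) ![t 0, t 1, s 2] t :=
    reflTransGen_solStep_of_eqOn_compl hu₂ ht 2 fun k hk => by fin_cases k <;> simp_all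
  exact (h₁.trans h₂).trans h₃

theorem stmt1_general (d : ℕ) (b : Fin 4 → ℝ) :
    (∀ s t : Fin 3 → ℤ, Feas d A0 b s → Feas d A0 b t → t 0 ≤ s 0 →
      Feas d A0 b ![s 0, t 1, s 2] ∧ Feas d A0 b ![t 0, t 1, s 2]) ∧
    SolConnected d A0 b := by
  refine ⟨fun s t hs ht hts => ⟨feas_A0_of_mem_Icc hs ht hts le_rfl,
    feas_A0_of_mem_Icc hs ht le_rfl hts⟩, fun x y hx hy => ?_⟩
  rcases le_total (y 0) (x 0) with h | h
  · exact reflTransGen_solStep_A0_of_le hx hy h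
  · exact Std.Symm.symm _ _ (reflTransGen_solStep_A0_of_le hy hx h)

theorem stmt1 (d : ℕ) (hd : 0 < d) (b : Fin 4 → ℝ) :
    (∀ s t : Fin 3 → ℤ, Feas d A0 b s → Feas d A0 b t → t 0 ≤ s 0 →
      Feas d A0 b ![s 0, t 1, s 2] ∧ Feas d A0 b ![t 0, t 1, s 2]) ∧
    SolConnected d A0 b :=
  stmt1_general d b
end

section
/- For every m ≥ 4 and n ≥ 3 there exists a matrix A ∈ ℝ^{m×n} such that A has no elimination ordering, and yet for every vector b ∈ ℝ^m the solution graph of the integer linear system (A,b) over D = {0,...,d} is connected. -/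
open Finset

/-!
The matrix has rows `(-1,-1,0)`, `(-1,1,0)`, `(1,0,-1)`, `(1,0,1)` on three columns `c 0, c 1, c 2`
and vanishes elsewhere. Each of the three columns shares a row in which it is positive, and a row
in which it is negative, with another of them; so whichever of them comes first in an ordering
cannot be eliminated.

With `xᵢ = x (c i)` and `bₖ = b (r k)`, the system says `x₀ + b₁ ≤ x₁ ≤ -x₀ - b₀` and
`b₃ - x₀ ≤ x₂ ≤ x₀ - b₂`: the range allowed for `x₁` only grows as `x₀` decreases, the one for `x₂`
only grows as `x₀` increases. To join a feasible
`x` to a feasible `y` with `y₀ < x₀`, copy `y₂` (allowed at `x₀` since it is allowed at `y₀`) and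
lower `x₀` by one, until `x₀ = y₀`; then copy `y₁` and `y₂`. The free columns are copied first.
-/

open Function Relation

theorem hammingDist_update_self {ι : Type*} [Fintype ι] [DecidableEq ι] {β : ι → Type*}
    [∀ i, DecidableEq (β i)] (x : ∀ i, β i) {k : ι} {v : β k} (hv : v ≠ x k) :
    hammingDist x (update x k v) = 1 := by
  rw [hammingDist, Finset.card_eq_one]
  refine ⟨k, Finset.ext fun j => ?_⟩
  by_cases hj : j = k
  · subst hj; simp [Ne.symm hv]
  · simp [hj]

theorem InD.update {d : ℕ} {ι : Type} [DecidableEq ι] {x : ι → ℤ} (hx : InD d x) (k : ι) {v : ℤ}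
    (hv : 0 ≤ v ∧ v ≤ d) : InD d (update x k v) := by
  intro j
  by_cases hj : j = k
  · subst hj; simpa using hv
  · simpa [hj] using hx j

theorem InD.piecewise {d : ℕ} {ι : Type} [DecidableEq ι] {x y : ι → ℤ} (hx : InD d x)
    (hy : InD d y) (S : Finset ι) : InD d (S.piecewise y x) := by
  intro j
  by_cases hj : j ∈ S
  · simpa [hj] using hy j
  · simpa [hj] using hx j

section SolutionGraph

variable {d m : ℕ} {ι : Type} [Fintype ι] [DecidableEq ι] {A : Matrix (Fin m) ι ℝ}
  {b : Fin m → ℝ}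

theorem SolStep.symm {u v : ι → ℤ} (h : SolStep d A b u v) : SolStep d A b v u :=
  ⟨h.2.1, h.1, by rw [hammingDist_comm, h.2.2]⟩

instance inst_s2 : Std.Symm (SolStep d A b) := ⟨fun _ _ => SolStep.symm⟩

theorem reflTransGen_update {x : ι → ℤ} {k : ι} {v : ℤ} (hx : Feas d A b x)
    (hv : Feas d A b (update x k v)) : ReflTransGen (SolStep d A b) x (update x k v) := by
  by_cases h : v = x k
  · rw [update_eq_self_iff.2 h]
  · exact .single ⟨hx, hv, hammingDist_update_self x h⟩

theorem Feas.piecewise_of_col_eq_zero {x y : ι → ℤ} {S : Finset ι}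
    (hS : ∀ k ∈ S, ∀ i, A i k = 0) (hx : Feas d A b x) (hy : Feas d A b y) :
    Feas d A b (S.piecewise y x) := by
  refine ⟨hx.1.piecewise hy.1 S, fun i => (hx.2 i).trans_eq (Finset.sum_congr rfl fun j _ => ?_)⟩
  by_cases hj : j ∈ S
  · simp [hS j hj i]
  · simp [hj]

theorem reflTransGen_piecewise_of_col_eq_zero {x y : ι → ℤ} {S : Finset ι}
    (hS : ∀ k ∈ S, ∀ i, A i k = 0) (hx : Feas d A b x) (hy : Feas d A b y) :
    ReflTransGen (SolStep d A b) x (S.piecewise y x) := by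
  induction S using Finset.induction_on with
  | empty => rw [Finset.piecewise_empty]
  | insert k S _ ih =>
    have hS' : ∀ k ∈ S, ∀ i, A i k = 0 := fun k hk => hS k (Finset.mem_insert_of_mem hk)
    rw [Finset.piecewise_insert]
    refine (ih hS').trans (reflTransGen_update (Feas.piecewise_of_col_eq_zero hS' hx hy) ?_)
    rw [← Finset.piecewise_insert]
    exact Feas.piecewise_of_col_eq_zero hS hx hy

end SolutionGraph

theorem not_canElim_of_blocked {m : ℕ} {ι : Type} {A : Matrix (Fin m) ι ℝ} {j k k' : ι}
    {i i' : Fin m} (hpos : 0 < A i j) (hk : k ≠ j) (hik : A i k ≠ 0)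
    (hneg : A i' j < 0) (hk' : k' ≠ j) (hik' : A i' k' ≠ 0) : ¬ CanElim A j := by
  rintro (h | h)
  exacts [hik (h i hpos k hk), hik' (h i' hneg k' hk')]

theorem not_hasEO_of_blocked {m n : ℕ} {A : Matrix (Fin m) (Fin n) ℝ} {S : Finset (Fin n)}
    (hS : S.Nonempty)
    (hpos : ∀ j ∈ S, ∃ i, 0 < A i j ∧ ∃ k ∈ S, k ≠ j ∧ A i k ≠ 0)
    (hneg : ∀ j ∈ S, ∃ i, A i j < 0 ∧ ∃ k ∈ S, k ≠ j ∧ A i k ≠ 0) : ¬ HasEO A := by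
  rintro ⟨σ, hσ⟩
  obtain ⟨j, hjS, hmin⟩ := S.exists_min_image σ.symm hS
  set J := (Finset.univ.filter fun t' => t' < σ.symm j).image σ
  have hJS : ∀ k ∈ S, k ∉ J := by
    intro k hk hkJ
    obtain ⟨t, ht, rfl⟩ := Finset.mem_image.1 hkJ
    have := hmin _ hk
    simp only [Finset.mem_filter, Finset.mem_univ, true_and, Equiv.symm_apply_apply] at ht this
    exact absurd ht (not_lt.2 this)
  have hcol : ∀ k ∈ S, ∀ i, elimCols A J i k = A i k := fun k hk i => if_neg (hJS k hk)
  obtain ⟨i, hi, k, hk, hkj, hik⟩ := hpos j hjS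
  obtain ⟨i', hi', k', hk', hkj', hik'⟩ := hneg j hjS
  have := hσ (σ.symm j)
  rw [Equiv.apply_symm_apply] at this
  exact not_canElim_of_blocked (by rwa [hcol j hjS]) hkj (by rwa [hcol k hk])
    (by rwa [hcol j hjS]) hkj' (by rwa [hcol k' hk']) this

section BlockedMatrix

variable {m n : ℕ} (r : Fin 4 ↪ Fin m) (c : Fin 3 ↪ Fin n)

noncomputable def blockedMatrix : Matrix (Fin m) (Fin n) ℝ := fun i =>
  if i = r 0 then -Pi.single (c 0) 1 - Pi.single (c 1) 1
  else if i = r 1 then -Pi.single (c 0) 1 + Pi.single (c 1) 1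
  else if i = r 2 then Pi.single (c 0) 1 - Pi.single (c 2) 1
  else if i = r 3 then Pi.single (c 0) 1 + Pi.single (c 2) 1
  else 0

theorem blockedMatrix_apply_of_notMem_range {j : Fin n} (hj : j ∉ Set.range c) (i : Fin m) :
    blockedMatrix r c i j = 0 := by
  have hsingle (k : Fin 3) : (Pi.single (c k) 1 : Fin n → ℝ) j = 0 :=
    Pi.single_eq_of_ne (fun h => hj ⟨k, h.symm⟩) _
  simp only [blockedMatrix]
  split_ifs <;> simp [hsingle]

theorem not_hasEO_blockedMatrix : ¬ HasEO (blockedMatrix r c) := by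
  refine not_hasEO_of_blocked (S := Finset.univ.map c) (by simp) ?_ ?_ <;>
    simp only [Finset.mem_map, Finset.mem_univ, true_and, forall_exists_index,
      forall_apply_eq_imp_iff, exists_exists_eq_and] <;> intro j <;> fin_cases j
  · exact ⟨r 2, by simp [blockedMatrix], 2, by simp, by simp [blockedMatrix]⟩
  · exact ⟨r 1, by simp [blockedMatrix], 0, by simp, by simp [blockedMatrix]⟩
  · exact ⟨r 3, by simp [blockedMatrix], 0, by simp, by simp [blockedMatrix]⟩
  · exact ⟨r 0, by simp [blockedMatrix], 1, by simp, by simp [blockedMatrix]⟩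
  · exact ⟨r 0, by simp [blockedMatrix], 0, by simp, by simp [blockedMatrix]⟩
  · exact ⟨r 2, by simp [blockedMatrix], 0, by simp, by simp [blockedMatrix]⟩

end BlockedMatrix

section BlockedMatrixFeas

variable {d m n : ℕ} {r : Fin 4 ↪ Fin m} {c : Fin 3 ↪ Fin n} {b : Fin m → ℝ} {x y : Fin n → ℤ}

theorem blockedMatrix_rowSum (i : Fin m) (v : Fin n → ℝ) :
    ∑ j, blockedMatrix r c i j * v j =
      if i = r 0 then -v (c 0) - v (c 1)
      else if i = r 1 then -v (c 0) + v (c 1)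
      else if i = r 2 then v (c 0) - v (c 2)
      else if i = r 3 then v (c 0) + v (c 2)
      else 0 := by
  change blockedMatrix r c i ⬝ᵥ v = _
  simp only [blockedMatrix]
  split_ifs <;> simp [sub_dotProduct, add_dotProduct, neg_dotProduct]

theorem feas_blockedMatrix_iff :
    Feas d (blockedMatrix r c) b x ↔ InD d x ∧ (∀ i ∉ Set.range r, b i ≤ 0) ∧
      b (r 0) ≤ -x (c 0) - x (c 1) ∧ b (r 1) ≤ -x (c 0) + x (c 1) ∧
      b (r 2) ≤ x (c 0) - x (c 2) ∧ b (r 3) ≤ x (c 0) + x (c 2) := by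
  simp only [Feas, blockedMatrix_rowSum]
  refine and_congr_right fun _ => ⟨fun h => ⟨fun i hi => ?_, ?_⟩, fun h i => ?_⟩
  · simpa [show ∀ k, i ≠ r k from fun k e => hi ⟨k, e.symm⟩] using h i
  · exact ⟨by simpa using h (r 0), by simpa using h (r 1), by simpa using h (r 2),
      by simpa using h (r 3)⟩
  · obtain ⟨hrest, h0, h1, h2, h3⟩ := h
    split_ifs with e0 e1 e2 e3
    · exact e0 ▸ h0
    · exact e1 ▸ h1
    · exact e2 ▸ h2
    · exact e3 ▸ h3
    · refine hrest i ?_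
      rintro ⟨k, rfl⟩
      fin_cases k <;> simp_all

theorem reflTransGen_blockedMatrix_of_eq (hx : Feas d (blockedMatrix r c) b x)
    (hy : Feas d (blockedMatrix r c) b y) (h0 : x (c 0) = y (c 0))
    (hpad : ∀ j ∉ Set.range c, x j = y j) :
    ReflTransGen (SolStep d (blockedMatrix r c) b) x y := by
  obtain ⟨hxD, hxr, -, -, hx2, hx3⟩ := feas_blockedMatrix_iff.1 hx
  obtain ⟨hyD, -, hy0, hy1, -, -⟩ := feas_blockedMatrix_iff.1 hy
  set z := update x (c 1) (y (c 1))
  have hzy : update z (c 2) (y (c 2)) = y := by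
    funext j
    by_cases hj : j ∈ Set.range c
    · obtain ⟨k, rfl⟩ := hj
      fin_cases k <;> simp [z, h0]
    · have hne (k : Fin 3) : j ≠ c k := fun e => hj ⟨k, e.symm⟩
      simp [z, hne, hpad j hj]
  have hz : Feas d (blockedMatrix r c) b z := by
    refine feas_blockedMatrix_iff.2 ⟨hxD.update _ (hyD _), hxr, ?_⟩
    rw [← h0] at hy0 hy1
    simp only [z, update_self, update_of_ne, ne_eq, EmbeddingLike.apply_eq_iff_eq, Fin.reduceEq,
      not_false_eq_true]
    exact ⟨hy0, hy1, hx2, hx3⟩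
  rw [← hzy] at hy ⊢
  exact (reflTransGen_update hx hz).trans (reflTransGen_update hz hy)

theorem exists_reflTransGen_blockedMatrix_pred (hx : Feas d (blockedMatrix r c) b x)
    (hy : Feas d (blockedMatrix r c) b y) (hlt : y (c 0) < x (c 0)) :
    ∃ x', Feas d (blockedMatrix r c) b x' ∧ x' (c 0) = x (c 0) - 1 ∧
      (∀ j ∉ Set.range c, x' j = x j) ∧ ReflTransGen (SolStep d (blockedMatrix r c) b) x x' := by
  obtain ⟨hxD, hxr, hx0, hx1, -, -⟩ := feas_blockedMatrix_iff.1 hx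
  obtain ⟨hyD, -, -, -, hy2, hy3⟩ := feas_blockedMatrix_iff.1 hy
  have hlt' : (y (c 0) : ℝ) + 1 ≤ x (c 0) := by exact_mod_cast hlt
  set z := update x (c 2) (y (c 2))
  have hz : Feas d (blockedMatrix r c) b z := by
    refine feas_blockedMatrix_iff.2 ⟨hxD.update _ (hyD _), hxr, ?_⟩
    simp only [z, update_self, update_of_ne, ne_eq, EmbeddingLike.apply_eq_iff_eq, Fin.reduceEq,
      not_false_eq_true]
    exact ⟨hx0, hx1, by linarith, by linarith⟩
  have hx0D : 0 ≤ x (c 0) - 1 ∧ x (c 0) - 1 ≤ d := by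
    have := hyD (c 0); have := hxD (c 0); omega
  have hx' : Feas d (blockedMatrix r c) b (update z (c 0) (x (c 0) - 1)) := by
    refine feas_blockedMatrix_iff.2 ⟨(hxD.update _ (hyD _)).update _ hx0D, hxr, ?_⟩
    simp only [z, update_self, update_of_ne, ne_eq, EmbeddingLike.apply_eq_iff_eq, Fin.reduceEq,
      not_false_eq_true, Int.cast_sub, Int.cast_one]
    exact ⟨by linarith, by linarith, by linarith, by linarith⟩
  refine ⟨_, hx', update_self .., fun j hj => ?_,
    (reflTransGen_update hx hz).trans (reflTransGen_update hz hx')⟩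
  have hne (k : Fin 3) : j ≠ c k := fun e => hj ⟨k, e.symm⟩
  simp [z, hne]

theorem reflTransGen_blockedMatrix_of_le (hx : Feas d (blockedMatrix r c) b x)
    (hy : Feas d (blockedMatrix r c) b y) (hle : y (c 0) ≤ x (c 0))
    (hpad : ∀ j ∉ Set.range c, x j = y j) :
    ReflTransGen (SolStep d (blockedMatrix r c) b) x y := by
  obtain ⟨k, hk⟩ : ∃ k : ℕ, x (c 0) = y (c 0) + k := ⟨(x (c 0) - y (c 0)).toNat, by omega⟩
  induction k generalizing x with
  | zero => exact reflTransGen_blockedMatrix_of_eq hx hy (by simpa using hk) hpad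
  | succ k ih =>
    obtain ⟨x', hx', hx'0, hx'pad, hxx'⟩ :=
      exists_reflTransGen_blockedMatrix_pred hx hy (by omega)
    exact hxx'.trans (ih hx' (by omega) (fun j hj => (hx'pad j hj).trans (hpad j hj)) (by omega))

end BlockedMatrixFeas

theorem solConnected_blockedMatrix {m n : ℕ} (d : ℕ) (r : Fin 4 ↪ Fin m) (c : Fin 3 ↪ Fin n)
    (b : Fin m → ℝ) : SolConnected d (blockedMatrix r c) b := by
  intro x y hx hy
  set S := (Finset.univ.map c)ᶜ
  have hS : ∀ k ∈ S, ∀ i, blockedMatrix r c i k = 0 := fun k hk =>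
    blockedMatrix_apply_of_notMem_range r c (by simpa [S] using hk)
  have hpad : ∀ j ∉ Set.range c, S.piecewise y x j = y j := fun j hj =>
    S.piecewise_eq_of_mem _ _ (by simpa [S] using hj)
  have hx₁ := Feas.piecewise_of_col_eq_zero hS hx hy
  refine (reflTransGen_piecewise_of_col_eq_zero hS hx hy).trans ?_
  rcases le_total (y (c 0)) (S.piecewise y x (c 0)) with h | h
  · exact reflTransGen_blockedMatrix_of_le hx₁ hy h hpad
  · exact symm (reflTransGen_blockedMatrix_of_le hy hx₁ h fun j hj => (hpad j hj).symm)

theorem stmt2_general (d : ℕ) (m n : ℕ) (hm : 4 ≤ m) (hn : 3 ≤ n) :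
    ∃ A : Matrix (Fin m) (Fin n) ℝ, ¬ HasEO A ∧ ∀ b : Fin m → ℝ, SolConnected d A b :=
  ⟨blockedMatrix (Fin.castLEEmb hm) (Fin.castLEEmb hn), not_hasEO_blockedMatrix _ _,
    solConnected_blockedMatrix d _ _⟩

theorem stmt2 (d : ℕ) (hd : 0 < d) (m n : ℕ) (hm : 4 ≤ m) (hn : 3 ≤ n) :
    ∃ A : Matrix (Fin m) (Fin n) ℝ, ¬ HasEO A ∧ ∀ b : Fin m → ℝ, SolConnected d A b :=
  stmt2_general d m n hm hn
end

section
/- Let A ∈ ℝ^{2×n} (n ≥ 1) be a matrix that cannot be eliminated at any column, and fix a positive integer d. Then there exists b ∈ ℝ^2 such that the solution graph of the integer linear system (A,b) over D = {0,...,d} is not connected: in fact there are two distinct feasible solutions p,q such that every vector at Hamming distance 1 from q is infeasible. -/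
open Finset

/-!
Two regimes. If two distinct points `p ≠ q` of the box `D^n` satisfy `A q ≤ A p`, take
`b = A q`: moving `q` along any coordinate `j` changes `A q` by a nonzero multiple of column `j`,
and since column `j` cannot be eliminated it has entries of both signs, so some row drops below
`b`. Otherwise the box is an antichain for the order of `A x`, so `x ↦ (A x)₀` is injective on it.
Among the pairs of points at Hamming distance at least two, take `x, y` with `(A y)₀ < (A x)₀`
minimising the gap; then `(A x)₁ < (A y)₁`, and `y` is isolated for `b = ((A y)₀, (A x)₁)`.
A feasible neighbour `z` of `y` lies strictly between them in row `0`, so by minimality it is also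
a neighbour of `x`, and then `x + y - z` and `z` form a pair at distance two with a smaller gap.
-/

section Hamming

variable {ι β : Type} [Fintype ι] [DecidableEq β] {x y z : ι → β}

theorem eq_of_hammingDist_le_one (h : hammingDist x y ≤ 1) {j : ι} (hj : x j ≠ y j) {i : ι}
    (hi : i ≠ j) : x i = y i := by
  by_contra hne
  exact hi (Finset.card_le_one.mp h i (by simpa using hne) j (by simpa using hj))

theorem hammingDist_le_one_of_eq_off {j : ι} (h : ∀ i, i ≠ j → x i = y i) :
    hammingDist x y ≤ 1 := by
  refine Finset.card_le_one.mpr fun i hi i' hi' => ?_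
  simp only [Finset.mem_filter, Finset.mem_univ, true_and] at hi hi'
  exact (not_not.mp (mt (h i) hi)).trans (not_not.mp (mt (h i') hi')).symm

theorem exists_eq_off_of_hammingDist_eq_one (h : hammingDist x y = 1) :
    ∃ j, x j ≠ y j ∧ ∀ i, i ≠ j → x i = y i := by
  obtain ⟨j, hj⟩ := Function.ne_iff.mp (hammingDist_pos.mp (h ▸ Nat.one_pos))
  exact ⟨j, hj, fun i hi => eq_of_hammingDist_le_one h.le hj hi⟩

theorem eq_or_eq_of_hammingDist_eq_one (hxz : hammingDist x z = 1) (hyz : hammingDist y z = 1)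
    (hxy : 2 ≤ hammingDist x y) (i : ι) : x i = z i ∨ y i = z i := by
  by_contra! hi
  have hoff : ∀ i', i' ≠ i → x i' = y i' := fun i' hi' =>
    (eq_of_hammingDist_le_one hxz.le hi.1 hi').trans
      (eq_of_hammingDist_le_one hyz.le hi.2 hi').symm
  have := hammingDist_le_one_of_eq_off hoff
  omega

end Hamming

section Box

variable {ι : Type} {d : ℕ}

theorem InD.add_sub {x y z : ι → ℤ} (hx : InD d x) (hy : InD d y)
    (h : ∀ i, x i = z i ∨ y i = z i) : InD d (x + y - z) := by
  intro i
  have := hx i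
  have := hy i
  rcases h i with h | h <;> simp only [Pi.add_apply, Pi.sub_apply] <;> omega

variable [Fintype ι]

theorem hammingDist_add_sub_left {x y z : ι → ℤ} (h : ∀ i, x i = z i ∨ y i = z i) :
    hammingDist (x + y - z) z = hammingDist x y := by
  unfold hammingDist
  congr 1
  refine Finset.filter_congr fun i _ => ?_
  have := h i
  simp only [Pi.add_apply, Pi.sub_apply]
  omega

theorem exists_two_le_hammingDist [Nontrivial ι] (hd : 0 < d) :
    ∃ x y : ι → ℤ, InD d x ∧ InD d y ∧ 2 ≤ hammingDist x y := by
  refine ⟨0, fun _ => 1, fun _ => by simp, fun _ => by simp; omega, ?_⟩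
  simpa [hammingDist_zero_left, hammingNorm, Nat.succ_le_iff] using Fintype.one_lt_card (α := ι)

theorem exists_minimal_pair [DecidableEq ι] [Nontrivial ι] (hd : 0 < d) (F : (ι → ℤ) → ℝ)
    (hF : ∀ p q, InD d p → InD d q → F p = F q → p = q) :
    ∃ x y, InD d x ∧ InD d y ∧ 2 ≤ hammingDist x y ∧ F y < F x ∧
      ∀ p q, InD d p → InD d q → 2 ≤ hammingDist p q → F x - F y ≤ |F p - F q| := by
  set B := Fintype.piFinset fun _ : ι => Finset.Icc 0 (d : ℤ)
  have mem_B : ∀ x, x ∈ B ↔ InD d x := by simp [B, InD]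
  set S := (B ×ˢ B).filter fun pq => 2 ≤ hammingDist pq.1 pq.2
  obtain ⟨x₀, y₀, hx₀, hy₀, hxy₀⟩ := exists_two_le_hammingDist (ι := ι) hd
  obtain ⟨⟨p, q⟩, hpq, hmin⟩ := S.exists_min_image (fun pq => |F pq.1 - F pq.2|)
    ⟨(x₀, y₀), by simpa [S, mem_B] using ⟨⟨hx₀, hy₀⟩, hxy₀⟩⟩
  simp only [S, Finset.mem_filter, Finset.mem_product, mem_B] at hpq hmin
  obtain ⟨⟨hp, hq⟩, hpq⟩ := hpq
  have hmin' : ∀ p' q', InD d p' → InD d q' → 2 ≤ hammingDist p' q' →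
      |F p - F q| ≤ |F p' - F q'| := fun p' q' hp' hq' h => hmin (p', q') ⟨⟨hp', hq'⟩, h⟩
  have hne : F p ≠ F q := by
    intro he
    rw [hF p q hp hq he, hammingDist_self] at hpq
    omega
  rcases hne.lt_or_gt with hlt | hlt
  · refine ⟨q, p, hq, hp, hammingDist_comm p q ▸ hpq, hlt, fun p' q' hp' hq' h => ?_⟩
    rw [← abs_of_pos (sub_pos.mpr hlt), abs_sub_comm]
    exact hmin' p' q' hp' hq' h
  · refine ⟨p, q, hp, hq, hpq, hlt, fun p' q' hp' hq' h => ?_⟩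
    rw [← abs_of_pos (sub_pos.mpr hlt)]
    exact hmin' p' q' hp' hq' h

end Box

section System

variable {m : ℕ} {ι : Type} {d : ℕ}

theorem exists_mul_neg_of_not_canElim {A : Matrix (Fin m) ι ℝ} {j : ι} (h : ¬ CanElim A j)
    {t : ℝ} (ht : t ≠ 0) : ∃ i, A i j * t < 0 := by
  simp only [CanElim, not_or, not_forall] at h
  obtain ⟨⟨i₁, hpos, -⟩, ⟨i₂, hneg, -⟩⟩ := h
  rcases ht.lt_or_gt with ht | ht
  · exact ⟨i₁, mul_neg_of_pos_of_neg hpos ht⟩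
  · exact ⟨i₂, mul_neg_of_neg_of_pos hneg ht⟩

theorem nontrivial_of_not_canElim {A : Matrix (Fin m) ι ℝ} {j : ι} (h : ¬ CanElim A j) :
    Nontrivial ι := by
  simp only [CanElim, not_or, not_forall] at h
  obtain ⟨⟨_, _, j', hj', _⟩, -⟩ := h
  exact ⟨⟨j', j, hj'⟩⟩

variable [Fintype ι]

def lhs (A : Matrix (Fin m) ι ℝ) (x : ι → ℤ) : Fin m → ℝ :=
  A.mulVec fun j => (x j : ℝ)

def IsIsolated [DecidableEq ι] (d : ℕ) (A : Matrix (Fin m) ι ℝ) (b : Fin m → ℝ) (q : ι → ℤ) :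
    Prop :=
  ∀ y, InD d y → hammingDist q y = 1 → ¬ Feas d A b y

variable (A : Matrix (Fin m) ι ℝ)

theorem lhs_add (x y : ι → ℤ) : lhs A (x + y) = lhs A x + lhs A y := by
  unfold lhs
  rw [← Matrix.mulVec_add]
  congr 1
  ext j
  simp

theorem lhs_sub (x y : ι → ℤ) : lhs A (x - y) = lhs A x - lhs A y := by
  unfold lhs
  rw [← Matrix.mulVec_sub]
  congr 1
  ext j
  simp

theorem lhs_single [DecidableEq ι] (j : ι) (t : ℤ) :
    lhs A (Pi.single j t) = fun i => A i j * t := by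
  have : (fun k => ((Pi.single j t : ι → ℤ) k : ℝ)) = Pi.single j (t : ℝ) := by
    ext k; by_cases hk : k = j <;> simp [hk]
  rw [lhs, this, Matrix.mulVec_single]
  ext i
  simp

theorem lhs_sub_of_eq_off [DecidableEq ι] {x y : ι → ℤ} {j : ι}
    (h : ∀ i, i ≠ j → x i = y i) : lhs A x - lhs A y = fun i => A i j * ((x j : ℝ) - y j) := by
  have : x - y = Pi.single j (x j - y j) := by
    ext i; by_cases hi : i = j <;> simp [hi, h]
  rw [← lhs_sub, this, lhs_single]
  push_cast
  rfl

theorem isIsolated_of_not_canElim [DecidableEq ι] (hA : ∀ j, ¬ CanElim A j) (q : ι → ℤ) :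
    IsIsolated d A (lhs A q) q := by
  intro y _ hqy hy
  obtain ⟨j, hj, hoff⟩ := exists_eq_off_of_hammingDist_eq_one ((hammingDist_comm y q).trans hqy)
  obtain ⟨i, hi⟩ :=
    exists_mul_neg_of_not_canElim (hA j) (sub_ne_zero.mpr (Int.cast_injective.ne hj))
  have hdiff := congrFun (lhs_sub_of_eq_off A hoff) i
  have hle : lhs A q i ≤ lhs A y i := hy.2 i
  simp only [Pi.sub_apply] at hdiff
  linarith

theorem not_solConnected_of_isIsolated [DecidableEq ι] {b : Fin m → ℝ} {p q : ι → ℤ}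
    (hp : Feas d A b p) (hq : Feas d A b q) (hpq : p ≠ q) (hiso : IsIsolated d A b q) :
    ¬ SolConnected d A b := by
  intro hc
  rcases (hc p q hp hq).cases_tail with heq | ⟨y, -, hyq⟩
  · exact hpq heq.symm
  · exact hiso y hyq.1.1 ((hammingDist_comm q y).trans hyq.2.2) hyq.1

end System

section TwoRows

variable {ι : Type} [Fintype ι] {d : ℕ} {A : Matrix (Fin 2) ι ℝ}

theorem fin_two_le_iff {α : Type} [Preorder α] {v w : Fin 2 → α} :
    v ≤ w ↔ v 0 ≤ w 0 ∧ v 1 ≤ w 1 := by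
  simp [Pi.le_def, Fin.forall_fin_two]

theorem eq_of_lhs_zero_eq (hanti : ∀ p q, InD d p → InD d q → lhs A q ≤ lhs A p → p = q)
    {p q : ι → ℤ} (hp : InD d p) (hq : InD d q) (h : lhs A p 0 = lhs A q 0) : p = q := by
  rcases le_total (lhs A p 1) (lhs A q 1) with h1 | h1
  · exact (hanti q p hq hp (fin_two_le_iff.mpr ⟨h.le, h1⟩)).symm
  · exact hanti p q hp hq (fin_two_le_iff.mpr ⟨h.ge, h1⟩)

theorem lhs_zero_lt_of_lhs_one_le
    (hanti : ∀ p q, InD d p → InD d q → lhs A q ≤ lhs A p → p = q)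
    {p q : ι → ℤ} (hp : InD d p) (hq : InD d q) (hpq : p ≠ q) (h : lhs A p 1 ≤ lhs A q 1) :
    lhs A q 0 < lhs A p 0 := by
  by_contra! h0
  exact hpq (hanti q p hq hp (fin_two_le_iff.mpr ⟨h0, h⟩)).symm

variable [DecidableEq ι]

theorem isIsolated_of_minimal_pair
    (hanti : ∀ p q, InD d p → InD d q → lhs A q ≤ lhs A p → p = q)
    {x y : ι → ℤ} (hx : InD d x) (hy : InD d y) (hxy : 2 ≤ hammingDist x y)
    (hmin : ∀ p q, InD d p → InD d q → 2 ≤ hammingDist p q →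
      lhs A x 0 - lhs A y 0 ≤ |lhs A p 0 - lhs A q 0|) :
    IsIsolated d A ![lhs A y 0, lhs A x 1] y := by
  intro z hz hyz hfz
  have h0 : lhs A y 0 ≤ lhs A z 0 := hfz.2 0
  have h1 : lhs A x 1 ≤ lhs A z 1 := hfz.2 1
  have hzy : z ≠ y := by rintro rfl; simp at hyz
  have hzx : z ≠ x := by rintro rfl; rw [hammingDist_comm] at hyz; omega
  have hzx0 : lhs A z 0 < lhs A x 0 := lhs_zero_lt_of_lhs_one_le hanti hx hz hzx.symm h1
  have hyz0 : lhs A y 0 < lhs A z 0 :=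
    h0.lt_of_ne fun e => hzy (eq_of_lhs_zero_eq hanti hz hy e.symm)
  have hxz : hammingDist x z = 1 := by
    by_contra hne
    have h2 : 2 ≤ hammingDist x z := by have := hammingDist_pos.mpr hzx.symm; omega
    have := hmin x z hx hz h2
    rw [abs_of_pos (sub_pos.mpr hzx0)] at this
    linarith
  have hcover := eq_or_eq_of_hammingDist_eq_one hxz hyz hxy
  have hu := hmin (x + y - z) z (hx.add_sub hy hcover) hz
    (hammingDist_add_sub_left hcover ▸ hxy)
  have hFu : lhs A (x + y - z) 0 = lhs A x 0 + lhs A y 0 - lhs A z 0 := by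
    rw [lhs_sub, lhs_add]
    rfl
  have hgap : |lhs A (x + y - z) 0 - lhs A z 0| < lhs A x 0 - lhs A y 0 := by
    rw [hFu]
    exact abs_lt.mpr ⟨by linarith, by linarith⟩
  linarith

theorem exists_isolated_of_antichain [Nontrivial ι] (hd : 0 < d)
    (hanti : ∀ p q, InD d p → InD d q → lhs A q ≤ lhs A p → p = q) :
    ∃ b p q, Feas d A b p ∧ Feas d A b q ∧ p ≠ q ∧ IsIsolated d A b q := by
  obtain ⟨x, y, hx, hy, hxy, hlt, hmin⟩ :=
    exists_minimal_pair hd (fun p => lhs A p 0) fun p q hp hq => eq_of_lhs_zero_eq hanti hp hq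
  have hne : x ≠ y := by rintro rfl; simp at hxy
  have h1 : lhs A x 1 < lhs A y 1 := by
    by_contra! h
    exact (lhs_zero_lt_of_lhs_one_le hanti hy hx hne.symm h).not_gt hlt
  exact ⟨![lhs A y 0, lhs A x 1], x, y, ⟨hx, fin_two_le_iff.mpr ⟨hlt.le, le_rfl⟩⟩,
    ⟨hy, fin_two_le_iff.mpr ⟨le_rfl, h1.le⟩⟩, hne,
    isIsolated_of_minimal_pair hanti hx hy hxy hmin⟩

end TwoRows

theorem stmt4 (d : ℕ) (hd : 0 < d) (n : ℕ) (hn : 1 ≤ n)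
    (A : Matrix (Fin 2) (Fin n) ℝ) (h : ∀ j, ¬ CanElim A j) :
    ∃ b : Fin 2 → ℝ, ∃ p q : Fin n → ℤ, Feas d A b p ∧ Feas d A b q ∧ p ≠ q ∧
      (∀ y : Fin n → ℤ, InD d y → hammingDist q y = 1 → ¬ Feas d A b y) ∧
      ¬ SolConnected d A b := by
  have := nontrivial_of_not_canElim (h ⟨0, hn⟩)
  obtain ⟨b, p, q, hp, hq, hpq, hiso⟩ :
      ∃ b p q, Feas d A b p ∧ Feas d A b q ∧ p ≠ q ∧ IsIsolated d A b q := by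
    by_cases hanti : ∀ p q, InD d p → InD d q → lhs A q ≤ lhs A p → p = q
    · exact exists_isolated_of_antichain hd hanti
    · push Not at hanti
      obtain ⟨p, q, hp, hq, hle, hpq⟩ := hanti
      exact ⟨lhs A q, p, q, ⟨hp, hle⟩, ⟨hq, fun _ => le_rfl⟩, hpq,
        isIsolated_of_not_canElim A h q⟩
  exact ⟨b, p, q, hp, hq, hpq, hiso, not_solConnected_of_isIsolated A hp hq hpq hiso⟩
end

section
/- Let A ∈ ℝ^{2×n} be a matrix with two rows that has no elimination ordering. Then there exists b ∈ ℝ^2 such that the solution graph of the integer linear system (A,b) over D = {0,...,d} is not connected. -/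
open Finset

/-!
Eliminating columns greedily until no further column can be eliminated leaves a nonempty set `T`
of columns such that, within `T`, every column has entries of opposite strict signs in the two rows
and `|T| ≥ 2`, while every column outside `T`, having been eliminated next to a column of `T`
without zero entries, is sign-coherent. Pick `p ∈ T` and `q ∈ T \ {p}`
with `|A 0 q|` minimal. Let `u` be the corner of the box maximising row 1 at `p`, row 0 on
`T \ {p}` and both rows outside `T`, and let `v` move `p` and `q` one step into the box. For
`b = min (A u) (A v)` both points are feasible, yet no feasible point can leave `u` in a single
coordinate of `T`, so the component of `u` is frozen on `T` while `v` is not.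
-/

theorem exists_forall_ne_eq_of_hammingDist_eq_one {ι : Type*} [Fintype ι] {β : ι → Type*}
    [∀ i, DecidableEq (β i)] {x y : ∀ i, β i} (h : hammingDist x y = 1) :
    ∃ j, ∀ k, k ≠ j → x k = y k := by
  obtain ⟨j, hj⟩ := Finset.card_eq_one.mp h
  refine ⟨j, fun k hk => by_contra fun hxy => hk ?_⟩
  have hk' : k ∈ ({j} : Finset ι) := hj ▸ Finset.mem_filter.mpr ⟨Finset.mem_univ k, hxy⟩
  exact Finset.mem_singleton.mp hk'

section SolutionGraph

variable {d m : ℕ} {ι : Type} [Fintype ι] [DecidableEq ι] {A : Matrix (Fin m) ι ℝ}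
  {b : Fin m → ℝ}

theorem eqOn_of_reflTransGen_solStep {u x : ι → ℤ} {T : Finset ι}
    (hlock : ∀ y, Feas d A b y → ∀ j ∈ T, (∀ k ∈ T, k ≠ j → y k = u k) → y j = u j)
    (h : Relation.ReflTransGen (SolStep d A b) u x) : ∀ j ∈ T, x j = u j := by
  induction h with
  | refl => exact fun _ _ => rfl
  | @tail z z' _ hstep ih =>
    obtain ⟨-, hz', hdist⟩ := hstep
    obtain ⟨j₀, hagree⟩ := exists_forall_ne_eq_of_hammingDist_eq_one hdist
    intro j hj
    rcases eq_or_ne j j₀ with rfl | hne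
    · exact hlock z' hz' j hj fun k hk hkj => (hagree k hkj) ▸ ih k hk
    · exact (hagree j hne) ▸ ih j hj

theorem not_solConnected_of_lock {u v : ι → ℤ} {T : Finset ι} (hu : Feas d A b u)
    (hv : Feas d A b v)
    (hlock : ∀ y, Feas d A b y → ∀ j ∈ T, (∀ k ∈ T, k ≠ j → y k = u k) → y j = u j)
    {j : ι} (hj : j ∈ T) (hvj : v j ≠ u j) : ¬ SolConnected d A b :=
  fun hconn => hvj (eqOn_of_reflTransGen_solStep hlock (hconn u v hu hv) j hj)

end SolutionGraph

section EliminationOrdering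

variable {m n : ℕ} {A : Matrix (Fin m) (Fin n) ℝ}

def IsElimPrefix (A : Matrix (Fin m) (Fin n) ℝ) (l : List (Fin n)) : Prop :=
  l.Nodup ∧ ∀ k (hk : k < l.length), CanElim (elimCols A (l.take k).toFinset) l[k]

theorem isElimPrefix_nil : IsElimPrefix A [] :=
  ⟨List.nodup_nil, fun _ hk => absurd hk (Nat.not_lt_zero _)⟩

theorem IsElimPrefix.concat {l : List (Fin n)} (hl : IsElimPrefix A l) {j : Fin n}
    (hj : j ∉ l) (h : CanElim (elimCols A l.toFinset) j) : IsElimPrefix A (l ++ [j]) := by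
  refine ⟨hl.1.append (List.nodup_singleton j) (by simpa using hj), fun k hk => ?_⟩
  rw [List.length_append, List.length_singleton] at hk
  rcases Nat.lt_or_ge k l.length with hkl | hkl
  · rw [List.take_append_of_le_length hkl.le, List.getElem_append_left hkl]
    exact hl.2 k hkl
  · obtain rfl : k = l.length := by omega
    simpa using h

theorem IsElimPrefix.hasEO {l : List (Fin n)} (hl : IsElimPrefix A l)
    (huniv : l.toFinset = univ) : HasEO A := by
  have hlen : l.length = n := by
    simpa [List.toFinset_card_of_nodup hl.1] using congrArg Finset.card huniv
  have hinj : Function.Injective fun t : Fin n => l[(t : ℕ)] :=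
    fun s t hst => Fin.ext ((hl.1.getElem_inj_iff).mp hst)
  refine ⟨Equiv.ofBijective _ (Finite.injective_iff_bijective.mp hinj), fun t => ?_⟩
  have hprefix : (univ.filter (fun t' => t' < t)).image
      (Equiv.ofBijective _ (Finite.injective_iff_bijective.mp hinj)) = (l.take t).toFinset := by
    ext j
    simp only [Finset.mem_image, Finset.mem_filter, Finset.mem_univ, true_and,
      List.mem_toFinset, Equiv.ofBijective_apply, List.mem_take_iff_getElem]
    constructor
    · rintro ⟨s, hst, rfl⟩
      exact ⟨s, by omega, rfl⟩
    · rintro ⟨i, hi, rfl⟩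
      exact ⟨⟨i, by omega⟩, Fin.mk_lt_of_lt_val (by omega), rfl⟩
  rw [hprefix]
  exact hl.2 t (by omega)

/-- `T` is the complement of an elimination prefix of maximal size. -/
theorem exists_stuck_of_not_hasEO (h : ¬ HasEO A) :
    ∃ T : Finset (Fin n), T.Nonempty ∧ (∀ j ∈ T, ¬ CanElim (elimCols A Tᶜ) j) ∧
      ∀ j ∉ T, ∃ J : Finset (Fin n), Disjoint J T ∧ j ∉ J ∧ CanElim (elimCols A J) j := by
  classical
  obtain ⟨E, hE, hEmax⟩ := Finset.exists_max_image
    (univ.filter fun E : Finset (Fin n) => ∃ l, IsElimPrefix A l ∧ l.toFinset = E) Finset.card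
    ⟨∅, Finset.mem_filter.mpr ⟨Finset.mem_univ _, [], isElimPrefix_nil, rfl⟩⟩
  obtain ⟨l, hl, rfl⟩ := (Finset.mem_filter.mp hE).2
  refine ⟨l.toFinsetᶜ, ?_, fun j hj hcan => ?_, fun j hj => ?_⟩
  · rw [← Finset.compl_ne_univ_iff_nonempty, compl_compl]
    exact fun huniv => h (hl.hasEO huniv)
  · have hjl : j ∉ l := by simpa using hj
    have hlonger := hEmax _ (Finset.mem_filter.mpr
      ⟨Finset.mem_univ _, l ++ [j], hl.concat hjl (by simpa using hcan), rfl⟩)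
    have hcard : (l ++ [j]).toFinset.card = l.toFinset.card + 1 := by
      simp [Finset.card_insert_of_notMem (List.mem_toFinset.not.mpr hjl)]
    omega
  · obtain ⟨k, hk, rfl⟩ := List.mem_iff_getElem.mp (by simpa using hj)
    refine ⟨(l.take k).toFinset, ?_, ?_, hl.2 k hk⟩
    · exact disjoint_compl_right_iff.mpr fun a ha => by
        simpa using List.mem_of_mem_take (List.mem_toFinset.mp ha)
    · rw [List.mem_toFinset, List.mem_take_iff_getElem]
      rintro ⟨i, hi, hik⟩
      have hik' := (hl.1.getElem_inj_iff).mp hik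
      omega

end EliminationOrdering

theorem exists_ne_of_not_canElim {m : ℕ} {ι : Type} {M : Matrix (Fin m) ι ℝ} {j : ι}
    (h : ¬ CanElim M j) : ∃ i j', j' ≠ j ∧ M i j' ≠ 0 := by
  simp only [CanElim, not_or, not_forall, exists_prop] at h
  obtain ⟨⟨i, -, j', hj', hM⟩, -⟩ := h
  exact ⟨i, j', hj', hM⟩

theorem mul_neg_of_not_canElim {ι : Type} {M : Matrix (Fin 2) ι ℝ} {j : ι}
    (h : ¬ CanElim M j) : M 0 j * M 1 j < 0 := by
  simp only [CanElim, not_or, not_forall, exists_prop] at h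
  obtain ⟨⟨i, hpos, -⟩, ⟨i', hneg, -⟩⟩ := h
  fin_cases i <;> fin_cases i'
  · exact absurd hneg hpos.le.not_gt
  · exact mul_neg_of_pos_of_neg hpos hneg
  · exact mul_neg_of_neg_of_pos hneg hpos
  · exact absurd hneg hpos.le.not_gt

theorem nonneg_or_nonpos_of_canElim_elimCols {m n : ℕ} {A : Matrix (Fin m) (Fin n) ℝ}
    {J : Finset (Fin n)} {j j₀ : Fin n} (hj : j ∉ J) (hj₀ : j₀ ∉ J) (hne : j₀ ≠ j)
    (hnz : ∀ i, A i j₀ ≠ 0) (h : CanElim (elimCols A J) j) :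
    (∀ i, 0 ≤ A i j) ∨ ∀ i, A i j ≤ 0 := by
  simp only [CanElim, elimCols, hj, if_false] at h
  rcases h with h | h
  · refine Or.inr fun i => not_lt.mp fun hpos => hnz i ?_
    simpa [hj₀] using h i hpos j₀ hne
  · refine Or.inl fun i => not_lt.mp fun hneg => hnz i ?_
    simpa [hj₀] using h i hneg j₀ hne

section Top

/-- `top d a ∈ D` maximises `x ↦ a * x` on `D`; `belowTop d a` is its neighbour in `D`. -/
noncomputable def top (d : ℕ) (a : ℝ) : ℤ := if 0 < a then d else 0

noncomputable def belowTop (d : ℕ) (a : ℝ) : ℤ := if 0 < a then d - 1 else 1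

variable {d : ℕ}

theorem top_mem (a : ℝ) : 0 ≤ top d a ∧ top d a ≤ d := by
  unfold top; split_ifs <;> omega

theorem belowTop_mem (hd : 0 < d) (a : ℝ) : 0 ≤ belowTop d a ∧ belowTop d a ≤ d := by
  unfold belowTop; split_ifs <;> omega

theorem belowTop_ne_top (a : ℝ) : belowTop d a ≠ top d a := by
  unfold top belowTop; split_ifs <;> omega

theorem mul_top_sub_nonneg {a s : ℝ} (hpos : 0 < s → 0 ≤ a) (hnonpos : s ≤ 0 → a ≤ 0) {x : ℤ}
    (hx : 0 ≤ x ∧ x ≤ d) : 0 ≤ a * ((top d s : ℝ) - x) := by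
  have hx0 : (0 : ℝ) ≤ x := by exact_mod_cast hx.1
  have hxd : (x : ℝ) ≤ d := by exact_mod_cast hx.2
  unfold top
  split_ifs with hs
  · exact mul_nonneg (hpos hs) (by push_cast; linarith)
  · exact mul_nonneg_of_nonpos_of_nonpos (hnonpos (not_lt.mp hs)) (by push_cast; linarith)

theorem mul_top_sum_sub_nonneg {κ : Type} [Fintype κ] {c : κ → ℝ}
    (hc : (∀ i, 0 ≤ c i) ∨ ∀ i, c i ≤ 0) (i : κ) {x : ℤ} (hx : 0 ≤ x ∧ x ≤ d) :
    0 ≤ c i * ((top d (∑ k, c k) : ℝ) - x) := by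
  refine mul_top_sub_nonneg (fun hs => ?_) (fun hs => ?_) hx
  · rcases hc with hc | hc
    · exact hc i
    · exact absurd hs (Finset.sum_nonpos fun k _ => hc k).not_gt
  · rcases hc with hc | hc
    · exact (Finset.single_le_sum (fun k _ => hc k) (mem_univ i)).trans hs
    · exact hc i

theorem abs_le_mul_top_sub (a : ℝ) {x : ℤ} (hx : 0 ≤ x ∧ x ≤ d) (hne : x ≠ top d a) :
    |a| ≤ a * ((top d a : ℝ) - x) := by
  unfold top at hne ⊢
  split_ifs at hne ⊢ with ha
  · have : (x : ℝ) ≤ d - 1 := by exact_mod_cast (by omega : x ≤ d - 1)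
    rw [abs_of_pos ha]; push_cast; nlinarith
  · have : (1 : ℝ) ≤ x := by exact_mod_cast (by omega : 1 ≤ x)
    rw [abs_of_nonpos (not_lt.mp ha)]; push_cast; nlinarith

theorem mul_top_sub_belowTop (a : ℝ) : a * ((top d a : ℝ) - belowTop d a) = |a| := by
  unfold top belowTop
  split_ifs with ha
  · rw [abs_of_pos ha]; push_cast; ring
  · rw [abs_of_nonpos (not_lt.mp ha)]; push_cast; ring

theorem mul_top_sub_belowTop_of_mul_neg {a c : ℝ} (h : c * a < 0) :
    c * ((top d a : ℝ) - belowTop d a) = -|c| := by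
  unfold top belowTop
  split_ifs with ha
  · rw [abs_of_neg (neg_of_mul_neg_left h ha.le)]; push_cast; ring
  · rw [abs_of_pos (pos_of_mul_neg_left h (not_lt.mp ha))]; push_cast; ring

end Top

section RowSums

variable {ι : Type} [Fintype ι] (a : ι → ℝ) {u y : ι → ℤ}

theorem abs_le_sum_sub_sum {j : ι} (hk : ∀ k, 0 ≤ a k * ((u k : ℝ) - y k))
    (hj : |a j| ≤ a j * ((u j : ℝ) - y j)) :
    |a j| ≤ ∑ k, a k * (u k : ℝ) - ∑ k, a k * (y k : ℝ) := by
  rw [← Finset.sum_sub_distrib]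
  calc |a j| ≤ a j * ((u j : ℝ) - y j) := hj
    _ ≤ ∑ k, a k * ((u k : ℝ) - y k) := Finset.single_le_sum (fun k _ => hk k) (mem_univ j)
    _ = ∑ k, (a k * (u k : ℝ) - a k * (y k : ℝ)) := by simp only [mul_sub]

theorem sum_sub_sum_of_eq_off_pair [DecidableEq ι] {p q : ι} (hqp : q ≠ p)
    (h : ∀ k, k ≠ p → k ≠ q → u k = y k) :
    ∑ k, a k * (u k : ℝ) - ∑ k, a k * (y k : ℝ) =
      a p * ((u p : ℝ) - y p) + a q * ((u q : ℝ) - y q) := by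
  rw [← Finset.sum_sub_distrib, ← Finset.sum_subset (subset_univ {p, q}), Finset.sum_pair hqp.symm]
  · ring
  · intro k _ hk
    simp only [mem_insert, mem_singleton, not_or] at hk
    rw [h k hk.1 hk.2, sub_self]

end RowSums

section TwoRows

variable {ι : Type} [DecidableEq ι] (d : ℕ) (A : Matrix (Fin 2) ι ℝ) (T : Finset ι) (p q : ι)

noncomputable def corner : ι → ℤ := fun j =>
  if j = p then top d (A 1 p) else if j ∈ T then top d (A 0 j) else top d (∑ i, A i j)

noncomputable def exchange : ι → ℤ :=
  Function.update (Function.update (corner d A T p) p (belowTop d (A 1 p))) q (belowTop d (A 0 q))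

variable {d A T p q}

theorem corner_self : corner d A T p p = top d (A 1 p) := by
  simp [corner]

theorem corner_of_mem {j : ι} (hj : j ∈ T) (hjp : j ≠ p) : corner d A T p j = top d (A 0 j) := by
  simp [corner, hj, hjp]

theorem exchange_left (hqp : q ≠ p) : exchange d A T p q p = belowTop d (A 1 p) := by
  rw [exchange, Function.update_of_ne hqp.symm, Function.update_self]

theorem exchange_right : exchange d A T p q q = belowTop d (A 0 q) := by
  rw [exchange, Function.update_self]

theorem exchange_of_ne {j : ι} (hjp : j ≠ p) (hjq : j ≠ q) :
    exchange d A T p q j = corner d A T p j := by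
  rw [exchange, Function.update_of_ne hjq, Function.update_of_ne hjp]

theorem inD_corner : InD d (corner d A T p) := fun j => by
  unfold corner; split_ifs <;> exact top_mem _

theorem inD_exchange (hd : 0 < d) (hqp : q ≠ p) : InD d (exchange d A T p q) := fun j => by
  rcases eq_or_ne j q with rfl | hjq
  · exact exchange_right (T := T) ▸ belowTop_mem hd _
  rcases eq_or_ne j p with rfl | hjp
  · exact exchange_left (T := T) hqp ▸ belowTop_mem hd _
  exact exchange_of_ne hjp hjq ▸ inD_corner j

theorem mul_corner_sub_nonneg (hp : p ∈ T)
    (hTc : ∀ j ∉ T, (∀ i, 0 ≤ A i j) ∨ ∀ i, A i j ≤ 0) {i : Fin 2} {j : ι}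
    (hj : corner d A T p j = top d (A i j)) {y : ι → ℤ} (hy : InD d y)
    (hagree : ∀ k ∈ T, k ≠ j → y k = corner d A T p k) (k : ι) :
    0 ≤ A i k * ((corner d A T p k : ℝ) - y k) := by
  rcases eq_or_ne k j with rfl | hkj
  · rw [hj]
    exact mul_top_sub_nonneg le_of_lt id (hy k)
  by_cases hkT : k ∈ T
  · rw [hagree k hkT hkj, sub_self, mul_zero]
  have hkp : k ≠ p := fun h => hkT (h ▸ hp)
  have hcorner : corner d A T p k = top d (∑ i, A i k) := by
    simp only [corner, if_neg hkp, if_neg hkT]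
  rw [hcorner]
  exact mul_top_sum_sub_nonneg (c := fun i => A i k) (hTc k hkT) i (hy k)

theorem exchange_right_ne (hq : q ∈ T) (hqp : q ≠ p) :
    exchange d A T p q q ≠ corner d A T p q := by
  rw [exchange_right, corner_of_mem hq hqp]
  exact belowTop_ne_top _

variable [Fintype ι]

variable (d A T p q) in
noncomputable def cornerRhs : Fin 2 → ℝ := fun i =>
  min (∑ j, A i j * (corner d A T p j : ℝ)) (∑ j, A i j * (exchange d A T p q j : ℝ))

theorem feas_corner : Feas d A (cornerRhs d A T p q) (corner d A T p) :=
  ⟨inD_corner, fun _ => min_le_left _ _⟩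

theorem feas_exchange (hd : 0 < d) (hqp : q ≠ p) :
    Feas d A (cornerRhs d A T p q) (exchange d A T p q) :=
  ⟨inD_exchange hd hqp, fun _ => min_le_right _ _⟩

theorem sum_corner_sub_sum_exchange_zero (hT : ∀ j ∈ T, A 0 j * A 1 j < 0) (hp : p ∈ T)
    (hq : q ∈ T) (hqp : q ≠ p) :
    ∑ j, A 0 j * (corner d A T p j : ℝ) - ∑ j, A 0 j * (exchange d A T p q j : ℝ) =
      |A 0 q| - |A 0 p| := by
  rw [sum_sub_sum_of_eq_off_pair _ hqp fun k hkp hkq => (exchange_of_ne hkp hkq).symm,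
    corner_self, exchange_left hqp, corner_of_mem hq hqp, exchange_right,
    mul_top_sub_belowTop_of_mul_neg (hT p hp), mul_top_sub_belowTop]
  ring

theorem sum_corner_sub_sum_exchange_one (hT : ∀ j ∈ T, A 0 j * A 1 j < 0)
    (hq : q ∈ T) (hqp : q ≠ p) :
    ∑ j, A 1 j * (corner d A T p j : ℝ) - ∑ j, A 1 j * (exchange d A T p q j : ℝ) =
      |A 1 p| - |A 1 q| := by
  rw [sum_sub_sum_of_eq_off_pair _ hqp fun k hkp hkq => (exchange_of_ne hkp hkq).symm,
    corner_self, exchange_left hqp, corner_of_mem hq hqp, exchange_right,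
    mul_top_sub_belowTop (A 1 p),
    mul_top_sub_belowTop_of_mul_neg (a := A 0 q) (by rw [mul_comm]; exact hT q hq)]
  ring

theorem sum_corner_sub_cornerRhs_zero_lt (hT : ∀ j ∈ T, A 0 j * A 1 j < 0) (hp : p ∈ T)
    (hq : q ∈ T) (hqp : q ≠ p) :
    ∑ j, A 0 j * (corner d A T p j : ℝ) - cornerRhs d A T p q 0 < |A 0 q| := by
  have hexchange := sum_corner_sub_sum_exchange_zero (d := d) hT hp hq hqp
  have hAp : 0 < |A 0 p| := abs_pos.mpr (left_ne_zero_of_mul (hT p hp).ne)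
  have hAq : 0 < |A 0 q| := abs_pos.mpr (left_ne_zero_of_mul (hT q hq).ne)
  exact sub_lt_comm.mp (lt_min (by linarith) (by linarith))

theorem sum_corner_sub_cornerRhs_one_lt (hT : ∀ j ∈ T, A 0 j * A 1 j < 0) (hp : p ∈ T)
    (hq : q ∈ T) (hqp : q ≠ p) :
    ∑ j, A 1 j * (corner d A T p j : ℝ) - cornerRhs d A T p q 1 < |A 1 p| := by
  have hexchange := sum_corner_sub_sum_exchange_one (d := d) hT hq hqp
  have hAp : 0 < |A 1 p| := abs_pos.mpr (right_ne_zero_of_mul (hT p hp).ne)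
  have hAq : 0 < |A 1 q| := abs_pos.mpr (right_ne_zero_of_mul (hT q hq).ne)
  exact sub_lt_comm.mp (lt_min (by linarith) (by linarith))

/-- Leaving `corner` at `p` costs row 1 at least `|A 1 p|`, and at `j ∈ T \ {p}` costs row 0 at
least `|A 0 j| ≥ |A 0 q|`; both exceed the slack left by `cornerRhs`. -/
theorem corner_locked (hT : ∀ j ∈ T, A 0 j * A 1 j < 0)
    (hTc : ∀ j ∉ T, (∀ i, 0 ≤ A i j) ∨ ∀ i, A i j ≤ 0) (hp : p ∈ T) (hq : q ∈ T) (hqp : q ≠ p)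
    (hqmin : ∀ j ∈ T, j ≠ p → |A 0 q| ≤ |A 0 j|) (y : ι → ℤ)
    (hy : Feas d A (cornerRhs d A T p q) y) (j : ι) (hj : j ∈ T)
    (hagree : ∀ k ∈ T, k ≠ j → y k = corner d A T p k) : y j = corner d A T p j := by
  by_contra hne
  rcases eq_or_ne j p with rfl | hjp
  · have hcorner : corner d A T j j = top d (A 1 j) := corner_self
    have hcost := abs_le_sum_sub_sum (A 1) (mul_corner_sub_nonneg hp hTc hcorner hy.1 hagree)
      (hcorner ▸ abs_le_mul_top_sub _ (hy.1 j) (hcorner ▸ hne))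
    linarith [hy.2 1, sum_corner_sub_cornerRhs_one_lt hT hp hq hqp (d := d)]
  · have hcorner : corner d A T p j = top d (A 0 j) := corner_of_mem hj hjp
    have hcost := abs_le_sum_sub_sum (A 0) (mul_corner_sub_nonneg hp hTc hcorner hy.1 hagree)
      (hcorner ▸ abs_le_mul_top_sub _ (hy.1 j) (hcorner ▸ hne))
    linarith [hy.2 0, sum_corner_sub_cornerRhs_zero_lt hT hp hq hqp (d := d), hqmin j hj hjp]

theorem not_solConnected_cornerRhs (hd : 0 < d) (hT : ∀ j ∈ T, A 0 j * A 1 j < 0)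
    (hTc : ∀ j ∉ T, (∀ i, 0 ≤ A i j) ∨ ∀ i, A i j ≤ 0) (hp : p ∈ T) (hq : q ∈ T) (hqp : q ≠ p)
    (hqmin : ∀ j ∈ T, j ≠ p → |A 0 q| ≤ |A 0 j|) : ¬ SolConnected d A (cornerRhs d A T p q) :=
  not_solConnected_of_lock feas_corner (feas_exchange hd hqp)
    (corner_locked hT hTc hp hq hqp hqmin) hq (exchange_right_ne hq hqp)

end TwoRows

theorem stmt5 (d : ℕ) (hd : 0 < d) (n : ℕ) (A : Matrix (Fin 2) (Fin n) ℝ)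
    (h : ¬ HasEO A) :
    ∃ b : Fin 2 → ℝ, ¬ SolConnected d A b := by
  obtain ⟨T, ⟨p, hp⟩, hstuck, helim⟩ := exists_stuck_of_not_hasEO h
  have hT : ∀ j ∈ T, A 0 j * A 1 j < 0 := fun j hj => by
    simpa [elimCols, hj] using mul_neg_of_not_canElim (hstuck j hj)
  have hnz : ∀ i, A i p ≠ 0 := by
    intro i
    fin_cases i
    exacts [left_ne_zero_of_mul (hT p hp).ne, right_ne_zero_of_mul (hT p hp).ne]
  have hTc : ∀ j ∉ T, (∀ i, 0 ≤ A i j) ∨ ∀ i, A i j ≤ 0 := fun j hj => by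
    obtain ⟨J, hJT, hjJ, hcan⟩ := helim j hj
    exact nonneg_or_nonpos_of_canElim_elimCols hjJ (Finset.disjoint_right.mp hJT hp)
      (fun h => hj (h ▸ hp)) hnz hcan
  obtain ⟨i, j, hjp, hij⟩ := exists_ne_of_not_canElim (hstuck p hp)
  have hj : j ∈ T := by
    by_contra hj
    exact hij (by simp [elimCols, hj])
  obtain ⟨q, hq, hqmin⟩ :=
    (T.erase p).exists_min_image (fun j => |A 0 j|) ⟨j, mem_erase.mpr ⟨hjp, hj⟩⟩
  obtain ⟨hqp, hqT⟩ := mem_erase.mp hq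
  exact ⟨_, not_solConnected_cornerRhs hd hT hTc hp hqT hqp
    fun j hj hjp => hqmin j (mem_erase.mpr ⟨hjp, hj⟩)⟩
end

section
/- Let A ∈ ℝ^{m×2} be a matrix with two columns that cannot be eliminated at either column. Then there exist row indices i_1, i_2 ∈ [m] such that sgn(a_{i_1 1}) = -sgn(a_{i_2 1}) and sgn(a_{i_1 2}) = -sgn(a_{i_2 2}). -/
open Finset

theorem Real.sign_eq_neg_sign_of_mul_neg {x y : ℝ} (h : x * y < 0) :
    Real.sign x = -Real.sign y := by
  rcases mul_neg_iff.mp h with ⟨hx, hy⟩ | ⟨hx, hy⟩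
  · rw [Real.sign_of_pos hx, Real.sign_of_neg hy, neg_neg]
  · rw [Real.sign_of_neg hx, Real.sign_of_pos hy]

theorem exists_of_not_canElim {m : ℕ} {ι : Type} {A : Matrix (Fin m) ι ℝ} {j : ι}
    (h : ¬ CanElim A j) :
    (∃ i, 0 < A i j ∧ ∃ j' ≠ j, A i j' ≠ 0) ∧ (∃ i, A i j < 0 ∧ ∃ j' ≠ j, A i j' ≠ 0) := by
  unfold CanElim at h
  push Not at h
  exact h

theorem exists_of_not_canElim_fin_two {m : ℕ} {A : Matrix (Fin m) (Fin 2) ℝ} {j k : Fin 2}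
    (hkj : k ≠ j) (h : ¬ CanElim A j) :
    (∃ i, 0 < A i j ∧ A i k ≠ 0) ∧ (∃ i, A i j < 0 ∧ A i k ≠ 0) := by
  have other_eq : ∀ j' ≠ j, j' = k := by omega
  obtain ⟨⟨p, hp, j', hj', hpj'⟩, ⟨n, hn, j'', hj'', hnj''⟩⟩ := exists_of_not_canElim h
  exact ⟨⟨p, hp, other_eq j' hj' ▸ hpj'⟩, ⟨n, hn, other_eq j'' hj'' ▸ hnj''⟩⟩

theorem exists_mul_neg_of_pos_of_neg {α : Type*} {P : α → Prop} {y : α → ℝ} {c : ℝ}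
    (hc : c ≠ 0) (hy : (∃ i, 0 < y i ∧ P i) ∧ (∃ i, y i < 0 ∧ P i)) :
    ∃ i, c * y i < 0 ∧ P i := by
  obtain ⟨⟨q, hq, hPq⟩, ⟨r, hr, hPr⟩⟩ := hy
  rcases hc.lt_or_gt with hc | hc
  · exact ⟨q, mul_neg_of_neg_of_pos hc hq, hPq⟩
  · exact ⟨r, mul_neg_of_pos_of_neg hc hr, hPr⟩

/-- If the rows `p, n` with `x p > 0 > x n` are not already opposite in `y`, then `y p, y n` have
the same sign and any row `w` with `y w` of the other sign is opposite to `p` or to `n`,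
according to the sign of `x w`. -/
theorem exists_mul_neg_and_mul_neg {α : Type*} (x y : α → ℝ)
    (hx : (∃ i, 0 < x i ∧ y i ≠ 0) ∧ (∃ i, x i < 0 ∧ y i ≠ 0))
    (hy : (∃ i, 0 < y i ∧ x i ≠ 0) ∧ (∃ i, y i < 0 ∧ x i ≠ 0)) :
    ∃ i₁ i₂, x i₁ * x i₂ < 0 ∧ y i₁ * y i₂ < 0 := by
  obtain ⟨⟨p, hxp, hyp⟩, ⟨n, hxn, hyn⟩⟩ := hx
  have hxpn : x p * x n < 0 := mul_neg_of_pos_of_neg hxp hxn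
  by_cases hypn : y p * y n < 0
  · exact ⟨p, n, hxpn, hypn⟩
  have hypn : 0 < y p * y n :=
    (not_lt.mp hypn).lt_of_ne (mul_ne_zero hyp hyn).symm
  obtain ⟨w, hypw, hxw⟩ := exists_mul_neg_of_pos_of_neg hyp hy
  rcases hxw.lt_or_gt with hxw | hxw
  · exact ⟨p, w, mul_neg_of_pos_of_neg hxp hxw, hypw⟩
  · have hynw : y n * y w < 0 := by nlinarith [sq_nonneg (y p)]
    exact ⟨n, w, mul_neg_of_neg_of_pos hxn hxw, hynw⟩

theorem stmt6 (m : ℕ) (A : Matrix (Fin m) (Fin 2) ℝ) (h : ∀ j, ¬ CanElim A j) :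
    ∃ i1 i2 : Fin m, Real.sign (A i1 0) = - Real.sign (A i2 0) ∧
      Real.sign (A i1 1) = - Real.sign (A i2 1) := by
  obtain ⟨i1, i2, h0, h1⟩ := exists_mul_neg_and_mul_neg (A · 0) (A · 1)
    (exists_of_not_canElim_fin_two one_ne_zero (h 0))
    (exists_of_not_canElim_fin_two zero_ne_one (h 1))
  exact ⟨i1, i2, Real.sign_eq_neg_sign_of_mul_neg h0, Real.sign_eq_neg_sign_of_mul_neg h1⟩
end

section
/- Let A ∈ ℝ^{3×3} be a matrix that cannot be eliminated at any column, and define Λ_{i_1,i_2} = { j ∈ [3] : sgn(a_{i_1 j}) = -sgn(a_{i_2 j}) ≠ 0 }. If there exist distinct i'_1, i'_2, i'_3 ∈ [3] with Λ_{i'_1,i'_2} ∩ Λ_{i'_2,i'_3} ≠ ∅, then there exist i_1, i_2 ∈ [3] with |Λ_{i_1,i_2}| ≥ 2. -/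
open Finset

open Classical in
/-- `Λ_{i₁,i₂}`: columns where rows `i₁` and `i₂` have (nonzero) opposite signs. -/
noncomputable def Lam {n : ℕ} (A : Matrix (Fin 3) (Fin n) ℝ) (i1 i2 : Fin 3) : Finset (Fin n) :=
  Finset.univ.filter
    (fun j => Real.sign (A i1 j) = - Real.sign (A i2 j) ∧ Real.sign (A i1 j) ≠ 0)

/-
Every column of a matrix that cannot be eliminated anywhere carries a positive and a negative
entry, so it lies in some `Λ_{a,b}` with `a ≠ b`. If `Λ_{1,2}` and `Λ_{2,3}` share a column `j₀`
and every `Λ` has at most one element, then neither contains another column, so the two columns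
other than `j₀` both lie in `Λ_{1,3}`.
-/

namespace Lam

variable {n : ℕ} {A : Matrix (Fin 3) (Fin n) ℝ} {a b : Fin 3} {j : Fin n}

theorem mem_comm : j ∈ Lam A a b ↔ j ∈ Lam A b a := by
  simp only [Lam, mem_filter, mem_univ, true_and]
  constructor <;> rintro ⟨hsign, hne⟩ <;>
    exact ⟨by rw [hsign, neg_neg], fun h₀ => hne (by rw [hsign, h₀, neg_zero])⟩

theorem notMem_self : j ∉ Lam A a a := by
  simp only [Lam, mem_filter, mem_univ, true_and, not_and, not_not]
  intro h
  linarith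

theorem exists_mem_of_not_canElim (h : ¬ CanElim A j) : ∃ a b, j ∈ Lam A a b := by
  simp only [CanElim, not_or, not_forall] at h
  obtain ⟨⟨ipos, hpos, -⟩, ⟨ineg, hneg, -⟩⟩ := h
  refine ⟨ipos, ineg, ?_⟩
  simp [Lam, Real.sign_of_pos hpos, Real.sign_of_neg hneg, hpos.ne']

theorem mem_of_pairwise_ne {c x y : Fin 3} (hab : a ≠ b) (hac : a ≠ c) (hbc : b ≠ c)
    (hj : j ∈ Lam A x y) : j ∈ Lam A a b ∨ j ∈ Lam A b c ∨ j ∈ Lam A a c := by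
  have cover : ∀ z : Fin 3, z = a ∨ z = b ∨ z = c := by omega
  have hj' := mem_comm.mp hj
  rcases cover x with rfl | rfl | rfl <;> rcases cover y with rfl | rfl | rfl <;>
    first | exact absurd hj notMem_self | tauto

end Lam

theorem stmt9 (A : Matrix (Fin 3) (Fin 3) ℝ) (h : ∀ j, ¬ CanElim A j)
    (i1' i2' i3' : Fin 3) (h12 : i1' ≠ i2') (h13 : i1' ≠ i3') (h23 : i2' ≠ i3')
    (hint : (Lam A i1' i2' ∩ Lam A i2' i3').Nonempty) :
    ∃ i1 i2 : Fin 3, 2 ≤ (Lam A i1 i2).card := by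
  obtain ⟨j₀, hj₀⟩ := hint
  rw [mem_inter] at hj₀
  by_contra! hsmall
  have unique {a b j} (h₀ : j₀ ∈ Lam A a b) (hj : j ∈ Lam A a b) : j = j₀ :=
    card_le_one.mp (Nat.lt_succ_iff.mp (hsmall a b)) _ hj _ h₀
  have hcol : univ.erase j₀ ⊆ Lam A i1' i3' := by
    intro j hj
    obtain ⟨x, y, hxy⟩ := Lam.exists_mem_of_not_canElim (h j)
    rcases Lam.mem_of_pairwise_ne h12 h13 h23 hxy with hm | hm | hm
    · exact absurd (unique hj₀.1 hm) (ne_of_mem_erase hj)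
    · exact absurd (unique hj₀.2 hm) (ne_of_mem_erase hj)
    · exact hm
  have := (card_le_card hcol).trans_lt (hsmall i1' i3')
  simp at this
end

section
/- (Expansion Lemma) Let A ∈ ℝ^{m×n}, let E ⊆ [n] be a set of columns produced by greedily eliminating columns of A (repeatedly adding to E any column at which the matrix with columns in E already zeroed can be eliminated, until no more exist), and let Δ = [n] \ E. Let A^r be the submatrix of A on columns Δ. If there exists b^r ∈ ℝ^m such that the solution graph of (A^r, b^r) over D = {0,...,d} is not connected, then there exists b ∈ ℝ^m such that the solution graph of (A, b) is not connected. -/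
open Finset

/-- `E` is produced by greedily eliminating columns of `A`: there is an ordering of `E`
such that each column can be eliminated in the matrix with the earlier ones zeroed out,
and no further column of the matrix with all of `E` zeroed out can be eliminated. -/
def GreedyElimSet {m n : ℕ} (A : Matrix (Fin m) (Fin n) ℝ) (E : Finset (Fin n)) : Prop :=
  (∃ l : List (Fin n), l.Nodup ∧ l.toFinset = E ∧
      ∀ t : Fin l.length, CanElim (elimCols A (l.take t).toFinset) (l.get t)) ∧
  ∀ j ∉ E, ¬ CanElim (elimCols A E) j


/-!
Columns are expanded one at a time, in reverse greedy order. If `M` can be eliminated at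
column `j`, there is an end `c` of `D` such that, for the right-hand side `M i j * c + b i`
(and just `M i j * c` on rows vanishing outside `j`), moving `x j` to `c` keeps every feasible
point feasible: either some row concentrated on `j` pins `x j` to `c`, or column `j` has a sign
for which that move never decreases a row sum. Hence extending by `x j = c` embeds the reduced
solutions into the full ones, and forgetting `x j` maps paths of the full solution graph to
paths of the reduced one, so disconnectedness lifts from the reduced system to the full one.
-/
section SolutionGraph

variable {d m : ℕ} {ι κ : Type} [Fintype ι] [Fintype κ]

lemma Feas.rhs_nonpos_of_row_eq_zero {M : Matrix (Fin m) ι ℝ}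
    {b : Fin m → ℝ} {x : ι → ℤ} (hx : Feas d M b x) {i : Fin m} (hi : ∀ k, M i k = 0) :
    b i ≤ 0 := by
  simpa [hi] using hx.2 i

lemma hammingDist_comp_le_of_injective {β : Type} [DecidableEq β] {f : κ → ι}
    (hf : Function.Injective f) (u v : ι → β) :
    hammingDist (u ∘ f) (v ∘ f) ≤ hammingDist u v :=
  Finset.card_le_card_of_injOn f (fun k hk => by simpa using hk) hf.injOn

lemma hammingDist_comp_equiv {β : Type} [DecidableEq β] (e : κ ≃ ι) (u v : ι → β) :
    hammingDist (u ∘ e) (v ∘ e) = hammingDist u v := by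
  refine le_antisymm (hammingDist_comp_le_of_injective e.injective u v) ?_
  simpa [Function.comp_def] using
    hammingDist_comp_le_of_injective e.symm.injective (u ∘ e) (v ∘ e)

lemma feas_submatrix_equiv_comp (e : κ ≃ ι) {M : Matrix (Fin m) ι ℝ} {b : Fin m → ℝ}
    {x : ι → ℤ} : Feas d (M.submatrix id e) b (x ∘ e) ↔ Feas d M b x := by
  have hsum (i : Fin m) := e.sum_comp fun k => M i k * (x k : ℝ)
  simp only [Feas, InD, Matrix.submatrix_apply, id, Function.comp_apply, e.forall_congr_left,
    e.apply_symm_apply, hsum]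

lemma SolConnected.submatrix_equiv [DecidableEq ι] [DecidableEq κ] (e : κ ≃ ι)
    {M : Matrix (Fin m) ι ℝ} {b : Fin m → ℝ} (h : SolConnected d M b) :
    SolConnected d (M.submatrix id e) b := by
  have hcomp (x : κ → ℤ) : (x ∘ e.symm) ∘ e = x := by
    ext; simp
  intro x y hx hy
  rw [← hcomp x, feas_submatrix_equiv_comp] at hx
  rw [← hcomp y, feas_submatrix_equiv_comp] at hy
  rw [← hcomp x, ← hcomp y]
  refine (h _ _ hx hy).lift (· ∘ e) fun u v ⟨hu, hv, huv⟩ => ?_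
  exact ⟨(feas_submatrix_equiv_comp e).2 hu, (feas_submatrix_equiv_comp e).2 hv,
    (hammingDist_comp_equiv e u v).trans huv⟩

end SolutionGraph

section OneColumn

variable {d m : ℕ} {ι : Type}

noncomputable def elimTarget (d : ℕ) (M : Matrix (Fin m) ι ℝ) (j : ι) : ℤ :=
  open Classical in
  if ∀ i, 0 < M i j → ∀ k, k ≠ j → M i k = 0 then
    if ∃ i, 0 < M i j then d else 0
  else if ∃ i, M i j < 0 then 0 else d

noncomputable def expandRhs (d : ℕ) (M : Matrix (Fin m) ι ℝ) (j : ι) (b : Fin m → ℝ)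
    (i : Fin m) : ℝ :=
  open Classical in
  M i j * elimTarget d M j + if ∀ k, k ≠ j → M i k = 0 then 0 else b i

def dropCol (M : Matrix (Fin m) ι ℝ) (j : ι) : Matrix (Fin m) {k // k ≠ j} ℝ :=
  M.submatrix id Subtype.val

lemma elimTarget_mem (M : Matrix (Fin m) ι ℝ) (j : ι) :
    0 ≤ elimTarget d M j ∧ elimTarget d M j ≤ d := by
  unfold elimTarget; split_ifs <;> omega

variable [DecidableEq ι]

def extendAt (j : ι) (c : ℤ) (x : {k // k ≠ j} → ℤ) (k : ι) : ℤ :=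
  if h : k = j then c else x ⟨k, h⟩

@[simp]
lemma extendAt_self (j : ι) (c : ℤ) (x : {k // k ≠ j} → ℤ) : extendAt j c x j = c :=
  dif_pos rfl

@[simp]
lemma extendAt_val (j : ι) (c : ℤ) (x : {k // k ≠ j} → ℤ) (k : {k // k ≠ j}) :
    extendAt j c x k = x k :=
  dif_neg k.2

lemma extendAt_comp_val (j : ι) (c : ℤ) (x : {k // k ≠ j} → ℤ) :
    extendAt j c x ∘ Subtype.val = x :=
  funext (extendAt_val j c x)

variable [Fintype ι]

lemma sum_mul_eq_add_sum_dropCol (M : Matrix (Fin m) ι ℝ) (j : ι) (x : ι → ℤ) (i : Fin m) :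
    ∑ k, M i k * (x k : ℝ) = M i j * x j + ∑ k, dropCol M j i k * (x k : ℝ) :=
  Fintype.sum_eq_add_sum_subtype_ne _ j

lemma Feas.update_of_nonneg {M : Matrix (Fin m) ι ℝ} {b : Fin m → ℝ} {x : ι → ℤ}
    (hx : Feas d M b x) {j : ι} {a : ℤ} (ha : 0 ≤ a ∧ a ≤ d)
    (hmono : ∀ i, 0 ≤ M i j * (a - x j)) : Feas d M b (Function.update x j a) := by
  refine ⟨fun k => ?_, fun i => ?_⟩
  · rcases eq_or_ne k j with rfl | hk
    · simpa using ha
    · simpa [hk] using hx.1 k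
  · have hdiff : ∑ k, M i k * (Function.update x j a k : ℝ) - ∑ k, M i k * (x k : ℝ)
        = M i j * (a - x j) := by
      rw [← Finset.sum_sub_distrib, Finset.sum_eq_single j (fun k _ hk => by simp [hk])
        (by simp)]
      simp [mul_sub]
    linarith [hx.2 i, hmono i]

lemma Feas.mul_elimTarget_le {M : Matrix (Fin m) ι ℝ} {j : ι} {b : Fin m → ℝ} {x : ι → ℤ}
    (hx : Feas d M (expandRhs d M j b) x) {i : Fin m} (hi : ∀ k, k ≠ j → M i k = 0) :
    M i j * elimTarget d M j ≤ M i j * x j := by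
  have hsum := hx.2 i
  rw [sum_mul_eq_add_sum_dropCol M j, Finset.sum_eq_zero fun k _ => by
    simp [dropCol, hi k k.2]] at hsum
  rwa [expandRhs, if_pos hi, add_zero, add_zero] at hsum

lemma Feas.eq_elimTarget_or_nonneg {M : Matrix (Fin m) ι ℝ} {j : ι} (h : CanElim M j)
    {b : Fin m → ℝ} {x : ι → ℤ} (hx : Feas d M (expandRhs d M j b) x) :
    x j = elimTarget d M j ∨ ∀ i, 0 ≤ M i j * (elimTarget d M j - x j) := by
  have hxj : (0 : ℝ) ≤ x j ∧ (x j : ℝ) ≤ d := by exact_mod_cast hx.1 j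
  by_cases hpos : ∀ i, 0 < M i j → ∀ k, k ≠ j → M i k = 0
  · by_cases hex : ∃ i, 0 < M i j
    · obtain ⟨i, hi⟩ := hex
      have hc : elimTarget d M j = d := by rw [elimTarget, if_pos hpos, if_pos ⟨i, hi⟩]
      have hpin := hx.mul_elimTarget_le (hpos i hi)
      rw [hc] at hpin ⊢
      push_cast at hpin
      left
      exact_mod_cast le_antisymm hxj.2 (le_of_mul_le_mul_left hpin hi)
    · have hc : elimTarget d M j = 0 := by rw [elimTarget, if_pos hpos, if_neg hex]
      simp only [not_exists, not_lt] at hex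
      right
      intro i
      rw [hc]
      push_cast
      nlinarith [hex i]
  · have hneg := h.resolve_left hpos
    by_cases hex : ∃ i, M i j < 0
    · obtain ⟨i, hi⟩ := hex
      have hc : elimTarget d M j = 0 := by rw [elimTarget, if_neg hpos, if_pos ⟨i, hi⟩]
      have hpin := hx.mul_elimTarget_le (hneg i hi)
      rw [hc] at hpin ⊢
      push_cast at hpin
      left
      exact_mod_cast le_antisymm (by nlinarith) hxj.1
    · have hc : elimTarget d M j = d := by rw [elimTarget, if_neg hpos, if_neg hex]
      simp only [not_exists, not_lt] at hex
      right
      intro i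
      rw [hc]
      push_cast
      nlinarith [hex i]

lemma Feas.update_elimTarget {M : Matrix (Fin m) ι ℝ} {j : ι} (h : CanElim M j)
    {b : Fin m → ℝ} {x : ι → ℤ} (hx : Feas d M (expandRhs d M j b) x) :
    Feas d M (expandRhs d M j b) (Function.update x j (elimTarget d M j)) := by
  rcases hx.eq_elimTarget_or_nonneg h with hxj | hmono
  · rwa [← hxj, Function.update_eq_self]
  · exact hx.update_of_nonneg (elimTarget_mem M j) hmono

lemma Feas.extendAt_elimTarget {M : Matrix (Fin m) ι ℝ} {j : ι} {b : Fin m → ℝ}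
    {x : {k // k ≠ j} → ℤ} (hx : Feas d (dropCol M j) b x) :
    Feas d M (expandRhs d M j b) (extendAt j (elimTarget d M j) x) := by
  refine ⟨fun k => ?_, fun i => ?_⟩
  · unfold extendAt
    split_ifs with hk
    exacts [elimTarget_mem M j, hx.1 _]
  · rw [sum_mul_eq_add_sum_dropCol M j, expandRhs]
    simp only [extendAt_self, extendAt_val, add_le_add_iff_left]
    split_ifs with hrow
    · exact (Finset.sum_eq_zero fun k _ => by simp [dropCol, hrow k k.2]).ge
    · exact hx.2 i

lemma Feas.dropCol_of_eq {M : Matrix (Fin m) ι ℝ} {j : ι} {b : Fin m → ℝ}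
    (hb : ∀ i, (∀ k, k ≠ j → M i k = 0) → b i ≤ 0) {x : ι → ℤ}
    (hx : Feas d M (expandRhs d M j b) x) (hxj : x j = elimTarget d M j) :
    Feas d (dropCol M j) b (x ∘ Subtype.val) := by
  refine ⟨fun k => hx.1 k, fun i => ?_⟩
  have hsum := hx.2 i
  rw [sum_mul_eq_add_sum_dropCol M j, expandRhs, hxj, add_le_add_iff_left] at hsum
  split_ifs at hsum with hrow
  · exact (hb i hrow).trans (Finset.sum_eq_zero fun k _ => by simp [dropCol, hrow k k.2]).ge
  · exact hsum

lemma Feas.dropCol_of_canElim {M : Matrix (Fin m) ι ℝ} {j : ι} (h : CanElim M j)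
    {b : Fin m → ℝ} (hb : ∀ i, (∀ k, k ≠ j → M i k = 0) → b i ≤ 0) {x : ι → ℤ}
    (hx : Feas d M (expandRhs d M j b) x) : Feas d (dropCol M j) b (x ∘ Subtype.val) := by
  have hval : Function.update x j (elimTarget d M j) ∘ (Subtype.val : {k // k ≠ j} → ι)
      = x ∘ Subtype.val :=
    funext fun k => Function.update_of_ne k.2 _ x
  rw [← hval]
  exact (hx.update_elimTarget h).dropCol_of_eq hb (Function.update_self ..)

lemma SolStep.reflTransGen_dropCol {M : Matrix (Fin m) ι ℝ} {j : ι} (h : CanElim M j)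
    {b : Fin m → ℝ} (hb : ∀ i, (∀ k, k ≠ j → M i k = 0) → b i ≤ 0) {u v : ι → ℤ}
    (huv : SolStep d M (expandRhs d M j b) u v) :
    Relation.ReflTransGen (SolStep d (dropCol M j) b) (u ∘ Subtype.val) (v ∘ Subtype.val) := by
  obtain ⟨hu, hv, hdist⟩ := huv
  rcases Nat.le_one_iff_eq_zero_or_eq_one.1
    (hdist ▸ hammingDist_comp_le_of_injective (κ := {k // k ≠ j}) Subtype.val_injective u v)
    with h0 | h1
  · rw [hammingDist_eq_zero.1 h0]
  · exact .single ⟨hu.dropCol_of_canElim h hb, hv.dropCol_of_canElim h hb, h1⟩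

theorem not_solConnected_expandRhs {M : Matrix (Fin m) ι ℝ} {j : ι} (h : CanElim M j)
    {b : Fin m → ℝ} (hb : ¬SolConnected d (dropCol M j) b) :
    ¬SolConnected d M (expandRhs d M j b) := by
  intro hconn
  refine hb fun x y hx hy => ?_
  have hrow : ∀ i, (∀ k, k ≠ j → M i k = 0) → b i ≤ 0 := fun i hi =>
    hx.rhs_nonpos_of_row_eq_zero fun k => hi k k.2
  have hpath := (hconn _ _ hx.extendAt_elimTarget hy.extendAt_elimTarget).lift'
    (· ∘ Subtype.val) fun u v huv => huv.reflTransGen_dropCol h hrow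
  simpa only [Function.onFun, extendAt_comp_val] using hpath

end OneColumn

section Greedy

variable {d m n : ℕ}

lemma CanElim.submatrix_val {A : Matrix (Fin m) (Fin n) ℝ} {S : Finset (Fin n)} {j : Fin n}
    (hj : j ∉ S) (h : CanElim (elimCols A S) j) :
    CanElim (A.submatrix id ((↑) : {k // k ∉ S} → Fin n)) ⟨j, hj⟩ := by
  have hcol : ∀ i, elimCols A S i j = A i j := fun i => if_neg hj
  have hoff : ∀ i (k : {k // k ∉ S}), elimCols A S i k = A i k := fun i k => if_neg k.2
  rcases h with h | h
  · exact .inl fun i hi k hk =>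
      (hoff i k).symm.trans (h i (by rwa [hcol]) k fun hkj => hk (Subtype.ext hkj))
  · exact .inr fun i hi k hk =>
      (hoff i k).symm.trans (h i (by rwa [hcol]) k fun hkj => hk (Subtype.ext hkj))

lemma exists_not_solConnected_of_insert {A : Matrix (Fin m) (Fin n) ℝ} {S : Finset (Fin n)}
    {j : Fin n} (h : CanElim (elimCols A S) j)
    (hb : ∃ b, ¬SolConnected d (A.submatrix id ((↑) : {k // k ∉ insert j S} → Fin n)) b) :
    ∃ b, ¬SolConnected d (A.submatrix id ((↑) : {k // k ∉ S} → Fin n)) b := by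
  by_cases hj : j ∈ S
  · rwa [Finset.insert_eq_of_mem hj] at hb
  obtain ⟨b, hb⟩ := hb
  let e : {k // k ∉ insert j S} ≃ {k : {k // k ∉ S} // k ≠ ⟨j, hj⟩} :=
    { toFun := fun k => ⟨⟨k, fun hk => k.2 (Finset.mem_insert_of_mem hk)⟩,
        fun hk => k.2 (Finset.mem_insert.2 (.inl (congrArg Subtype.val hk)))⟩
      invFun := fun k => ⟨k.1, by
        simpa [Finset.mem_insert, k.1.2] using fun hkj => k.2 (Subtype.ext hkj)⟩
      left_inv := fun _ => rfl
      right_inv := fun _ => rfl }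
  exact ⟨_, not_solConnected_expandRhs (h.submatrix_val hj) fun hc => hb (hc.submatrix_equiv e)⟩

lemma exists_not_solConnected_of_elimList {A : Matrix (Fin m) (Fin n) ℝ} {l : List (Fin n)}
    (helim : ∀ t : Fin l.length, CanElim (elimCols A (l.take t).toFinset) (l.get t))
    (hb : ∃ b, ¬SolConnected d (A.submatrix id ((↑) : {k // k ∉ l.toFinset} → Fin n)) b) :
    ∃ b, ¬SolConnected d A b := by
  have hprefix : ∀ t ≤ l.length,
      ∃ b, ¬SolConnected d (A.submatrix id ((↑) : {k // k ∉ (l.take t).toFinset} → Fin n)) b := by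
    intro t ht
    induction ht using Nat.decreasingInduction with
    | self => rwa [List.take_length]
    | of_succ t ht ih =>
      refine exists_not_solConnected_of_insert (helim ⟨t, ht⟩) ?_
      have hinsert : (l.take (t + 1)).toFinset = insert (l.get ⟨t, ht⟩) (l.take t).toFinset := by
        rw [List.take_add_one, List.getElem?_eq_getElem ht, List.toFinset_append,
          Finset.union_comm]
        simp
      rwa [hinsert] at ih
  obtain ⟨b, hb⟩ := hprefix 0 (Nat.zero_le _)
  simp only [List.take_zero, List.toFinset_nil] at hb
  exact ⟨b, fun hA => hb (hA.submatrix_equiv (Equiv.subtypeUnivEquiv Finset.notMem_empty))⟩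

end Greedy

theorem stmt12_general (d : ℕ) (m n : ℕ) (A : Matrix (Fin m) (Fin n) ℝ)
    (E : Finset (Fin n)) (hE : GreedyElimSet A E)
    (br : Fin m → ℝ)
    (h : ¬ SolConnected d (fun i (j : {j : Fin n // j ∉ E}) => A i j.1) br) :
    ∃ b : Fin m → ℝ, ¬ SolConnected d A b := by
  obtain ⟨⟨l, -, rfl, helim⟩, -⟩ := hE
  exact exists_not_solConnected_of_elimList helim ⟨br, h⟩

theorem stmt12 (d : ℕ) (hd : 0 < d) (m n : ℕ) (A : Matrix (Fin m) (Fin n) ℝ)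
    (E : Finset (Fin n)) (hE : GreedyElimSet A E)
    (br : Fin m → ℝ)
    (h : ¬ SolConnected d (fun i (j : {j : Fin n // j ∉ E}) => A i j.1) br) :
    ∃ b : Fin m → ℝ, ¬ SolConnected d A b :=
  stmt12_general d m n A E hE br h
end

section
/- Let A ∈ ℝ^{m×n}, E ⊆ [n] a greedily eliminated set of columns as in the Expansion Lemma, Δ = [n] \ E, and A^r the submatrix on columns Δ. Define ζ' ∈ D^E by ζ'_k = d if column k was eliminated by the negative rule and ζ'_k = 0 if by the positive rule, and set b = b^r + b^e where b^e_i = Σ_{k∈E} a_{ik} ζ'_k. Then for every z ∈ D^Δ with A^r z ≥ b^r, the combined vector (z, ζ') ∈ D^n satisfies A(z,ζ') ≥ b. -/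
open Finset

section Glue

variable {ι : Type} [DecidableEq ι] {E : Finset ι}

theorem InD.dite_mem {d : ℕ} {y : ι → ℤ} {z : {j // j ∉ E} → ℤ}
    (hy : ∀ k ∈ E, 0 ≤ y k ∧ y k ≤ (d : ℤ)) (hz : InD d z) :
    InD d (fun j => if hj : j ∈ E then y j else z ⟨j, hj⟩) := by
  intro j
  by_cases hj : j ∈ E
  · simpa only [hj, dif_pos] using hy j hj
  · simpa only [hj, dif_neg, not_false_iff] using hz ⟨j, hj⟩

theorem sum_mul_dite_mem [Fintype ι] (a : ι → ℝ) (y : ι → ℤ) (z : {j // j ∉ E} → ℤ) :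
    ∑ j, a j * ((if hj : j ∈ E then y j else z ⟨j, hj⟩ : ℤ) : ℝ)
      = ∑ k ∈ E, a k * (y k : ℝ) + ∑ j : {j // j ∉ E}, a j.1 * (z j : ℝ) := by
  rw [← sum_add_sum_compl E, sum_subtype Eᶜ (fun _ => mem_compl)]
  congr 1
  · exact sum_congr rfl fun j hj => by rw [dif_pos hj]
  · exact sum_congr rfl fun j _ => by rw [dif_neg j.2]

end Glue

theorem stmt13_general (d : ℕ) (m n : ℕ) (A : Matrix (Fin m) (Fin n) ℝ)
    (E : Finset (Fin n))
    (rule : Fin n → Bool)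
    (zeta : Fin n → ℤ) (hzeta : ∀ k ∈ E, zeta k = if rule k then 0 else (d : ℤ))
    (br : Fin m → ℝ) (b : Fin m → ℝ)
    (hb : ∀ i, b i = br i + ∑ k ∈ E, A i k * (zeta k : ℝ))
    (z : {j : Fin n // j ∉ E} → ℤ) (hzD : InD d z)
    (hzf : ∀ i, br i ≤ ∑ j : {j : Fin n // j ∉ E}, A i j.1 * (z j : ℝ)) :
    Feas d A b (fun j => if hj : j ∈ E then zeta j else z ⟨j, hj⟩) := by
  have hzetaD : ∀ k ∈ E, 0 ≤ zeta k ∧ zeta k ≤ (d : ℤ) := fun k hk => by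
    rw [hzeta k hk]
    split <;> omega
  refine ⟨InD.dite_mem hzetaD hzD, fun i => ?_⟩
  rw [hb i, sum_mul_dite_mem]
  linarith [hzf i]

theorem stmt13 (d : ℕ) (hd : 0 < d) (m n : ℕ) (A : Matrix (Fin m) (Fin n) ℝ)
    (E : Finset (Fin n)) (l : List (Fin n)) (hnd : l.Nodup) (hlE : l.toFinset = E)
    (hmax : ∀ j ∉ E, ¬ CanElim (elimCols A E) j)
    (rule : Fin n → Bool)
    (hrule : ∀ t : Fin l.length,
      if rule (l.get t) then
        ∀ i, 0 < elimCols A (l.take t).toFinset i (l.get t) →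
          ∀ j' ≠ l.get t, elimCols A (l.take t).toFinset i j' = 0
      else
        ∀ i, elimCols A (l.take t).toFinset i (l.get t) < 0 →
          ∀ j' ≠ l.get t, elimCols A (l.take t).toFinset i j' = 0)
    (zeta : Fin n → ℤ) (hzeta : ∀ k ∈ E, zeta k = if rule k then 0 else (d : ℤ))
    (br : Fin m → ℝ) (b : Fin m → ℝ)
    (hb : ∀ i, b i = br i + ∑ k ∈ E, A i k * (zeta k : ℝ))
    (z : {j : Fin n // j ∉ E} → ℤ) (hzD : InD d z)
    (hzf : ∀ i, br i ≤ ∑ j : {j : Fin n // j ∉ E}, A i j.1 * (z j : ℝ)) :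
    Feas d A b (fun j => if hj : j ∈ E then zeta j else z ⟨j, hj⟩) :=
  stmt13_general d m n A E rule zeta hzeta br b hb z hzD hzf
end

section
/- Let A ∈ ℝ^{3×n} be a matrix with three rows that cannot be eliminated at any column, and suppose there exist i_1, i_2 ∈ [3] with |{ j : sgn(a_{i_1 j}) = -sgn(a_{i_2 j}) ≠ 0 }| ≥ 2. Then for every positive integer d there exists b ∈ ℝ^3 such that the solution graph of (A,b) over D = {0,...,d} is not connected. -/
open Finset

/-!
Only the rows `p = A i1` and `q = A i2` matter: the third right-hand side is chosen below every
value its row takes on `D^n`. On `Λ` the two rows have strictly opposite signs, and outside `Λ` a single point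
`z` maximises both rows at once, so a feasible `x` stays feasible for the two rows after its
coordinates outside `Λ` are reset to `z`. Hence it suffices to find thresholds `ρ, σ` and two
points `a ≠ a'` of the slice `{x ∈ D^n : x = z off Λ}` in the window `p·x ≥ ρ, q·x ≥ σ` such that
`a` has no Hamming neighbour in the window: along any path from `a`, the reset point stays `a`.

If two distinct points `u, v` of the slice satisfy `p·u ≤ p·v` and `q·u ≤ q·v`, take the window
at `u`: a single-coordinate move cannot raise both `p·x` and `q·x`. Otherwise `q·x` strictly
decreases as `p·x` increases, so the window spanned by two `p`-consecutive points of the slice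
contains only these two; some consecutive pair is not adjacent, since single-coordinate steps
that raise `p·x` are monotone for the order that reverses the coordinates where `p < 0`, while
the slice has two points incomparable for that order.
-/

namespace SolGraph

lemma eq_zero_of_mul_neg_of_mul_nonneg {p q t : ℝ} (hpq : p * q < 0) (hp : 0 ≤ p * t)
    (hq : 0 ≤ q * t) : t = 0 := by
  by_contra ht
  have : 0 < t ^ 2 := by positivity
  nlinarith [mul_nonneg hp hq]

noncomputable def jointMax (d : ℕ) (p q : ℝ) : ℤ := if 0 < p ∨ 0 < q then d else 0

lemma jointMax_comm (d : ℕ) (p q : ℝ) : jointMax d p q = jointMax d q p := by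
  simp only [jointMax, or_comm]

lemma mul_le_mul_jointMax {d : ℕ} {p q : ℝ} (hpq : 0 ≤ p * q) {t : ℤ} (ht : 0 ≤ t)
    (htd : t ≤ d) : p * t ≤ p * jointMax d p q := by
  unfold jointMax
  split_ifs with h
  · have hp : 0 ≤ p := by rcases h with h | h <;> nlinarith
    exact mul_le_mul_of_nonneg_left (by exact_mod_cast htd) hp
  · push_cast
    rw [mul_zero]
    exact mul_nonpos_of_nonpos_of_nonneg (not_lt.1 fun hp => h (Or.inl hp))
      (by exact_mod_cast ht)

variable {ι : Type}

lemma inD_jointMax (d : ℕ) (p q : ι → ℝ) : InD d fun j => jointMax d (p j) (q j) :=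
  fun j => by dsimp only [jointMax]; split_ifs <;> omega

/-- The product order on `ι → ℤ` with the coordinates where `p < 0` reversed and those where
`p = 0` ignored. -/
def WeightedLE (p : ι → ℝ) (u v : ι → ℤ) : Prop := ∀ j, 0 ≤ p j * ((v j : ℝ) - u j)

lemma WeightedLE.refl (p : ι → ℝ) (u : ι → ℤ) : WeightedLE p u u := fun j => by simp

lemma WeightedLE.trans {p : ι → ℝ} {u v w : ι → ℤ} (huv : WeightedLE p u v)
    (hvw : WeightedLE p v w) : WeightedLE p u w := fun j =>
  calc 0 ≤ p j * ((v j : ℝ) - u j) + p j * ((w j : ℝ) - v j) := add_nonneg (huv j) (hvw j)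
    _ = p j * ((w j : ℝ) - u j) := by ring

variable (d : ℕ) (Λ : Finset ι) (z : ι → ℤ)

def gridSlice : Set (ι → ℤ) := {x | InD d x ∧ ∀ j ∉ Λ, x j = z j}

section Piecewise

variable [DecidableEq ι]

lemma piecewise_mem_gridSlice {y : ι → ℤ} (hy : InD d y) (hz : InD d z) :
    Λ.piecewise y z ∈ gridSlice d Λ z :=
  ⟨fun j => by by_cases hj : j ∈ Λ <;> simp [hj, hy j, hz j], fun j hj => by simp [hj]⟩

lemma piecewise_eq_self_of_mem_gridSlice {x : ι → ℤ} (hx : x ∈ gridSlice d Λ z) :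
    Λ.piecewise x z = x :=
  funext fun j => by by_cases hj : j ∈ Λ <;> simp [hj, hx.2 j]

variable {d Λ z}

lemma exists_not_weightedLE_in_gridSlice (hd : 0 < d) (hz : InD d z) {p : ι → ℝ}
    (hp : ∀ j ∈ Λ, p j ≠ 0) {j₁ j₂ : ι} (hj₁ : j₁ ∈ Λ) (hj₂ : j₂ ∈ Λ) (hne : j₁ ≠ j₂) :
    ∃ u ∈ gridSlice d Λ z, ∃ v ∈ gridSlice d Λ z, ¬ WeightedLE p u v ∧ ¬ WeightedLE p v u := by
  let lo : ι → ℤ := fun j => if 0 < p j then 0 else d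
  let hi : ι → ℤ := fun j => d - lo j
  have hlohi : ∀ j ∈ Λ, p j * ((lo j : ℝ) - hi j) < 0 := fun j hj => by
    have hd' : (0 : ℝ) < d := by exact_mod_cast hd
    rcases (hp j hj).lt_or_gt with h | h
    · simp only [lo, hi, if_neg h.not_gt]; push_cast; nlinarith
    · simp only [lo, hi, if_pos h]; push_cast; nlinarith
  have hInD : ∀ j, 0 ≤ lo j ∧ lo j ≤ d ∧ 0 ≤ hi j ∧ hi j ≤ d := fun j => by
    simp only [lo, hi]; split_ifs <;> omega
  let e := Λ.piecewise lo z
  have hmem : ∀ j ∈ Λ, Function.update e j (hi j) ∈ gridSlice d Λ z := fun j hj => by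
    refine ⟨fun k => ?_, fun k hk => ?_⟩
    · by_cases hkj : k = j
      · subst hkj; simp [hInD k]
      · by_cases hk : k ∈ Λ <;> simp [e, hkj, hk, hInD k, hz k]
    · have hkj : k ≠ j := fun h => hk (h ▸ hj)
      simp [e, hkj, hk]
  have hincomp : ∀ j ∈ Λ, ∀ k ≠ j,
      ¬ WeightedLE p (Function.update e j (hi j)) (Function.update e k (hi k)) :=
    fun j hj k hkj h => by
      have := h j
      simp only [Function.update_self, Function.update_of_ne hkj.symm, e,
        piecewise_eq_of_mem _ _ _ hj] at this
      linarith [hlohi j hj]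
  exact ⟨_, hmem j₁ hj₁, _, hmem j₂ hj₂, hincomp j₁ hj₁ j₂ hne.symm, hincomp j₂ hj₂ j₁ hne⟩

end Piecewise

variable [Fintype ι]

def weightedSum (p : ι → ℝ) (x : ι → ℤ) : ℝ := ∑ j, p j * x j

def window (p q : ι → ℝ) (ρ σ : ℝ) : Set (ι → ℤ) :=
  {x | x ∈ gridSlice d Λ z ∧ ρ ≤ weightedSum p x ∧ σ ≤ weightedSum q x}

lemma exists_ne_of_hammingDist_eq_one {β : Type*} [DecidableEq β] {u v : ι → β}
    (h : hammingDist u v = 1) : ∃ j₀, u j₀ ≠ v j₀ ∧ ∀ j ≠ j₀, u j = v j := by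
  obtain ⟨j₀, hj₀⟩ := Finset.card_eq_one.1 h
  have hmem : ∀ j, j ∈ ({j₀} : Finset ι) ↔ u j ≠ v j := fun j => by
    rw [← hj₀, Finset.mem_filter]; simp
  exact ⟨j₀, (hmem j₀).1 (Finset.mem_singleton_self _),
    fun j hj => not_not.1 fun hne => hj (Finset.mem_singleton.1 ((hmem j).2 hne))⟩

lemma weightedSum_sub_weightedSum {p : ι → ℝ} {u v : ι → ℤ} {j₀ : ι}
    (h : ∀ j ≠ j₀, u j = v j) :
    weightedSum p v - weightedSum p u = p j₀ * ((v j₀ : ℝ) - u j₀) := by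
  rw [weightedSum, weightedSum, ← Finset.sum_sub_distrib, Finset.sum_eq_single j₀]
  · ring
  · intro j _ hj
    rw [h j hj]; ring
  · simp

lemma weightedLE_of_hammingDist_eq_one {p : ι → ℝ} {u v : ι → ℤ} (h : hammingDist u v = 1)
    (hle : weightedSum p u ≤ weightedSum p v) : WeightedLE p u v := by
  obtain ⟨j₀, -, hj₀⟩ := exists_ne_of_hammingDist_eq_one h
  intro j
  by_cases hj : j = j₀
  · subst hj
    rw [← weightedSum_sub_weightedSum hj₀]
    linarith
  · simp [hj₀ j hj]

variable {d Λ z}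

lemma hammingDist_ne_one_of_le_of_le {p q : ι → ℝ} (hpq : ∀ j ∈ Λ, p j * q j < 0)
    {u w : ι → ℤ} (hu : u ∈ gridSlice d Λ z) (hw : w ∈ gridSlice d Λ z)
    (hp : weightedSum p u ≤ weightedSum p w) (hq : weightedSum q u ≤ weightedSum q w) :
    hammingDist u w ≠ 1 := by
  intro h
  obtain ⟨j₀, hne, hj₀⟩ := exists_ne_of_hammingDist_eq_one h
  have hj₀Λ : j₀ ∈ Λ := by
    by_contra hj
    exact hne ((hu.2 j₀ hj).trans (hw.2 j₀ hj).symm)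
  have hzero := eq_zero_of_mul_neg_of_mul_nonneg (hpq j₀ hj₀Λ)
    (by rw [← weightedSum_sub_weightedSum hj₀]; linarith)
    (by rw [← weightedSum_sub_weightedSum hj₀]; linarith)
  exact hne (by exact_mod_cast (sub_eq_zero.1 hzero).symm)

lemma exists_consecutive_of_not_weightedLE {p : ι → ℝ} {S : Set (ι → ℤ)} (hS : S.Finite)
    (hinj : S.InjOn (weightedSum p)) {u v : ι → ℤ} (hu : u ∈ S) (hv : v ∈ S)
    (huv : ¬ WeightedLE p u v) (hvu : ¬ WeightedLE p v u) :
    ∃ a ∈ S, ∃ b ∈ S, weightedSum p a ≤ weightedSum p b ∧ ¬ WeightedLE p a b ∧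
      ∀ w ∈ S, weightedSum p a ≤ weightedSum p w → weightedSum p w ≤ weightedSum p b →
        w = a ∨ w = b := by
  set P := weightedSum p
  let T : Set ((ι → ℤ) × (ι → ℤ)) :=
    {ab | ab.1 ∈ S ∧ ab.2 ∈ S ∧ P ab.1 ≤ P ab.2 ∧ ¬ WeightedLE p ab.1 ab.2}
  have hT : T.Finite := (hS.prod hS).subset fun _ hab => ⟨hab.1, hab.2.1⟩
  have hTne : T.Nonempty := by
    rcases le_total (P u) (P v) with h | h
    · exact ⟨(u, v), hu, hv, h, huv⟩
    · exact ⟨(v, u), hv, hu, h, hvu⟩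
  obtain ⟨⟨a, b⟩, ⟨ha, hb, hab, hnab⟩, hmin⟩ :=
    Set.exists_min_image T (fun ab => P ab.2 - P ab.1) hT hTne
  refine ⟨a, ha, b, hb, hab, hnab, fun w hw haw hwb => ?_⟩
  by_contra hw'
  obtain ⟨hwa, hwb₀⟩ := not_or.1 hw'
  have haw' : P a < P w := lt_of_le_of_ne haw fun h => hwa (hinj hw ha h.symm)
  have hwb' : P w < P b := lt_of_le_of_ne hwb fun h => hwb₀ (hinj hw hb h)
  by_cases hle : WeightedLE p a w
  · have hnwb : ¬ WeightedLE p w b := fun h => hnab (hle.trans h)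
    have := hmin (w, b) ⟨hw, hb, hwb, hnwb⟩
    dsimp only at this
    linarith
  · have := hmin (a, w) ⟨ha, hw, haw, hle⟩
    dsimp only at this
    linarith

variable [DecidableEq ι]

lemma finite_setOf_InD (d : ℕ) : {x : ι → ℤ | InD d x}.Finite :=
  (Set.finite_Icc (0 : ι → ℤ) (fun _ => (d : ℤ))).subset
    fun _ hx => ⟨fun j => (hx j).1, fun j => (hx j).2⟩

lemma weightedSum_le_piecewise {p : ι → ℝ} {y : ι → ℤ}
    (h : ∀ j ∉ Λ, p j * y j ≤ p j * z j) :
    weightedSum p y ≤ weightedSum p (Λ.piecewise y z) :=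
  Finset.sum_le_sum fun j _ => by by_cases hj : j ∈ Λ <;> simp [hj, h j]

lemma weightedSum_le_piecewise_jointMax {p q : ι → ℝ} (hpq : ∀ j ∉ Λ, 0 ≤ p j * q j)
    {y : ι → ℤ} (hy : InD d y) :
    weightedSum p y ≤ weightedSum p (Λ.piecewise y fun j => jointMax d (p j) (q j)) ∧
      weightedSum q y ≤ weightedSum q (Λ.piecewise y fun j => jointMax d (p j) (q j)) := by
  refine ⟨weightedSum_le_piecewise fun j hj => ?_, weightedSum_le_piecewise fun j hj => ?_⟩
  · exact mul_le_mul_jointMax (hpq j hj) (hy j).1 (hy j).2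
  · rw [jointMax_comm]
    exact mul_le_mul_jointMax (mul_comm (p j) (q j) ▸ hpq j hj) (hy j).1 (hy j).2

lemma exists_window_with_isolated_point_of_strictAnti (hd : 0 < d) (hz : InD d z) {p q : ι → ℝ}
    (hp : ∀ j ∈ Λ, p j ≠ 0) {j₁ j₂ : ι} (hj₁ : j₁ ∈ Λ) (hj₂ : j₂ ∈ Λ) (hne : j₁ ≠ j₂)
    (hanti : ∀ u ∈ gridSlice d Λ z, ∀ v ∈ gridSlice d Λ z, u ≠ v →
      weightedSum p u ≤ weightedSum p v → weightedSum q v < weightedSum q u) :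
    ∃ ρ σ, ∃ a ∈ window d Λ z p q ρ σ, ∃ b ∈ window d Λ z p q ρ σ,
      a ≠ b ∧ ∀ w ∈ window d Λ z p q ρ σ, hammingDist a w ≠ 1 := by
  set S := gridSlice d Λ z
  set P := weightedSum p
  set Q := weightedSum q
  have hinj : S.InjOn P := fun u hu v hv h => by
    by_contra huv
    linarith [hanti u hu v hv huv h.le, hanti v hv u hu (Ne.symm huv) h.ge]
  obtain ⟨u, hu, v, hv, huv, hvu⟩ := exists_not_weightedLE_in_gridSlice hd hz hp hj₁ hj₂ hne
  obtain ⟨a, ha, b, hb, hab, hnab, hbetween⟩ := exists_consecutive_of_not_weightedLE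
    ((finite_setOf_InD d).subset fun _ hx => hx.1) hinj hu hv huv hvu
  have hab' : a ≠ b := fun h => hnab (h ▸ WeightedLE.refl p a)
  refine ⟨P a, Q b, a, ⟨ha, le_rfl, (hanti a ha b hb hab' hab).le⟩, b, ⟨hb, hab, le_rfl⟩,
    hab', fun w ⟨hw, haw, hbw⟩ hdist => ?_⟩
  have hwb : P w ≤ P b := by
    by_contra h
    exact (hanti b hb w hw (fun hbw' => h (hbw' ▸ le_rfl)) (not_le.1 h).le).not_ge hbw
  rcases hbetween w hw haw hwb with rfl | rfl
  · simp at hdist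
  · exact hnab (weightedLE_of_hammingDist_eq_one hdist hab)

theorem exists_window_with_isolated_point (hd : 0 < d) (hz : InD d z) {p q : ι → ℝ}
    (hpq : ∀ j ∈ Λ, p j * q j < 0) {j₁ j₂ : ι} (hj₁ : j₁ ∈ Λ) (hj₂ : j₂ ∈ Λ) (hne : j₁ ≠ j₂) :
    ∃ ρ σ, ∃ a ∈ window d Λ z p q ρ σ, ∃ b ∈ window d Λ z p q ρ σ,
      a ≠ b ∧ ∀ w ∈ window d Λ z p q ρ σ, hammingDist a w ≠ 1 := by
  by_cases hmono : ∃ u ∈ gridSlice d Λ z, ∃ v ∈ gridSlice d Λ z, u ≠ v ∧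
      weightedSum p u ≤ weightedSum p v ∧ weightedSum q u ≤ weightedSum q v
  · obtain ⟨u, hu, v, hv, huv, hp, hq⟩ := hmono
    exact ⟨_, _, u, ⟨hu, le_rfl, le_rfl⟩, v, ⟨hv, hp, hq⟩, huv,
      fun w hw => hammingDist_ne_one_of_le_of_le hpq hu hw.1 hw.2.1 hw.2.2⟩
  · refine exists_window_with_isolated_point_of_strictAnti hd hz (fun j hj h0 => ?_) hj₁ hj₂ hne
      fun u hu v hv huv hp => ?_
    · simpa [h0] using hpq j hj
    · by_contra hq
      exact hmono ⟨u, hu, v, hv, huv, hp, not_lt.1 hq⟩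

lemma piecewise_eq_of_reflTransGen {W : Set (ι → ℤ)} {a : ι → ℤ}
    (ha : ∀ w ∈ W, hammingDist a w ≠ 1) {r : (ι → ℤ) → (ι → ℤ) → Prop}
    (hr : ∀ u v, r u v → hammingDist u v = 1 ∧ Λ.piecewise v z ∈ W) {x y : ι → ℤ}
    (hx : Λ.piecewise x z = a) (hxy : Relation.ReflTransGen r x y) :
    Λ.piecewise y z = a := by
  induction hxy with
  | refl => exact hx
  | @tail u v _ huv ih =>
    obtain ⟨hdist, hW⟩ := hr u v huv
    have hle : hammingDist (Λ.piecewise u z) (Λ.piecewise v z) ≤ 1 :=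
      hdist ▸ hammingDist_comp_le_hammingDist (fun j t => if j ∈ Λ then t else z j)
    rcases Nat.le_one_iff_eq_zero_or_eq_one.1 hle with h0 | h1
    · exact (hammingDist_eq_zero.1 h0).symm.trans ih
    · exact absurd (ih ▸ h1) (ha _ hW)

lemma not_solConnected_of_window {m : ℕ} {A : Matrix (Fin m) ι ℝ} {i1 i2 : Fin m}
    (hi : i1 ≠ i2) (hz : InD d z) (hmax : ∀ y, InD d y →
      weightedSum (A i1) y ≤ weightedSum (A i1) (Λ.piecewise y z) ∧
        weightedSum (A i2) y ≤ weightedSum (A i2) (Λ.piecewise y z))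
    {ρ σ : ℝ} {a a' : ι → ℤ} (ha : a ∈ window d Λ z (A i1) (A i2) ρ σ)
    (ha' : a' ∈ window d Λ z (A i1) (A i2) ρ σ) (hne : a ≠ a')
    (hiso : ∀ w ∈ window d Λ z (A i1) (A i2) ρ σ, hammingDist a w ≠ 1) :
    ∃ b, ¬ SolConnected d A b := by
  choose lb hlb using fun i => ((finite_setOf_InD d).image (weightedSum (A i))).bddBelow
  let b : Fin m → ℝ := fun i => if i = i1 then ρ else if i = i2 then σ else lb i
  have hfeas : ∀ x ∈ window d Λ z (A i1) (A i2) ρ σ, Feas d A b x := by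
    intro x ⟨hx, hρ, hσ⟩
    refine ⟨hx.1, fun i => ?_⟩
    by_cases h1 : i = i1
    · subst h1; simpa [b, weightedSum] using hρ
    by_cases h2 : i = i2
    · subst h2; simpa [b, h1, weightedSum] using hσ
    simpa [b, h1, h2, weightedSum] using hlb i ⟨x, hx.1, rfl⟩
  have hproj : ∀ y, Feas d A b y → Λ.piecewise y z ∈ window d Λ z (A i1) (A i2) ρ σ := by
    intro y ⟨hy, hrows⟩
    refine ⟨piecewise_mem_gridSlice d Λ z hy hz, ?_, ?_⟩
    · exact le_trans (by simpa [b, weightedSum] using hrows i1) (hmax y hy).1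
    · exact le_trans (by simpa [b, hi.symm, weightedSum] using hrows i2) (hmax y hy).2
  refine ⟨b, fun hconn => hne ?_⟩
  have := piecewise_eq_of_reflTransGen hiso (fun u v huv => ⟨huv.2.2, hproj v huv.2.1⟩)
    (piecewise_eq_self_of_mem_gridSlice d Λ z ha.1) (hconn a a' (hfeas a ha) (hfeas a' ha'))
  rwa [piecewise_eq_self_of_mem_gridSlice d Λ z ha'.1, eq_comm] at this

end SolGraph

open SolGraph

lemma mem_Lam_iff {n : ℕ} {A : Matrix (Fin 3) (Fin n) ℝ} {i1 i2 : Fin 3} {j : Fin n} :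
    j ∈ Lam A i1 i2 ↔ A i1 j * A i2 j < 0 := by
  simp only [Lam, mem_filter, mem_univ, true_and]
  rcases lt_trichotomy (A i1 j) 0 with h1 | h1 | h1 <;>
  rcases lt_trichotomy (A i2 j) 0 with h2 | h2 | h2 <;>
  simp [h1, h2, h1.not_gt, h2.not_gt, Real.sign_of_pos, Real.sign_of_neg, mul_neg_iff] <;>
  norm_num

theorem stmt15_general (n : ℕ) (A : Matrix (Fin 3) (Fin n) ℝ)
    (i1 i2 : Fin 3) (hcard : 2 ≤ (Lam A i1 i2).card) :
    ∀ d : ℕ, 0 < d → ∃ b : Fin 3 → ℝ, ¬ SolConnected d A b := by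
  intro d hd
  have hopp : ∀ j ∈ Lam A i1 i2, A i1 j * A i2 j < 0 := fun j => mem_Lam_iff.1
  have hoff : ∀ j ∉ Lam A i1 i2, 0 ≤ A i1 j * A i2 j := fun j hj =>
    not_lt.1 (mt mem_Lam_iff.2 hj)
  obtain ⟨j₁, hj₁, j₂, hj₂, hne⟩ := one_lt_card.1 hcard
  have hi : i1 ≠ i2 := by
    rintro rfl
    exact (mul_self_nonneg _).not_gt (hopp j₁ hj₁)
  have hz := inD_jointMax d (A i1) (A i2)
  obtain ⟨ρ, σ, a, ha, a', ha', haa', hiso⟩ :=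
    exists_window_with_isolated_point hd hz hopp hj₁ hj₂ hne
  exact not_solConnected_of_window hi hz (fun y => weightedSum_le_piecewise_jointMax hoff)
    ha ha' haa' hiso

theorem stmt15 (n : ℕ) (A : Matrix (Fin 3) (Fin n) ℝ) (h : ∀ j, ¬ CanElim A j)
    (i1 i2 : Fin 3) (hcard : 2 ≤ (Lam A i1 i2).card) :
    ∀ d : ℕ, 0 < d → ∃ b : Fin 3 → ℝ, ¬ SolConnected d A b :=
  stmt15_general n A i1 i2 hcard
end

section
/- Let A ∈ ℝ^{m×2} with no elimination ordering, and let i_1, i_2 ∈ [m] be rows with sgn(a_{i_1 j}) = -sgn(a_{i_2 j}) for j = 1,2. Let A' be the 2×2 submatrix of A on rows i_1, i_2, and suppose b' ∈ ℝ^2 is such that the solution graph of (A', b') over D = {0,...,d} is not connected. Define b ∈ ℝ^m by b_{i_1} = b'_1, b_{i_2} = b'_2, and b_k = -d·(|a_{k1}| + |a_{k2}|) for k ∉ {i_1, i_2}. Then R(A,b) = R(A',b') as subsets of D^2, and the solution graph of (A,b) is not connected. -/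
open Finset

theorem neg_mul_sum_abs_le_sum_mul {d : ℕ} {ι : Type} [Fintype ι] {x : ι → ℤ}
    (hx : InD d x) (a : ι → ℝ) : -(d : ℝ) * ∑ j, |a j| ≤ ∑ j, a j * (x j : ℝ) := by
  rw [mul_sum]
  refine sum_le_sum fun j _ => ?_
  have hxj : |(x j : ℝ)| ≤ d := by
    rw [abs_of_nonneg (by exact_mod_cast (hx j).1)]
    exact_mod_cast (hx j).2
  calc -(d : ℝ) * |a j| ≤ -|a j * (x j : ℝ)| := by
        rw [abs_mul, neg_mul, neg_le_neg_iff, mul_comm]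
        exact mul_le_mul_of_nonneg_right hxj (abs_nonneg _)
    _ ≤ a j * (x j : ℝ) := neg_abs_le _

theorem solConnected_iff_of_feas_iff {d m m' : ℕ} {ι : Type} [Fintype ι] [DecidableEq ι]
    {A : Matrix (Fin m) ι ℝ} {b : Fin m → ℝ} {A' : Matrix (Fin m') ι ℝ} {b' : Fin m' → ℝ}
    (h : ∀ x, Feas d A b x ↔ Feas d A' b' x) :
    SolConnected d A b ↔ SolConnected d A' b' := by
  have hstep : SolStep d A b = SolStep d A' b' := by
    funext u v
    simp only [SolStep, h]
  simp only [SolConnected, hstep, h]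

theorem feas_iff_feas_of_rows {d m : ℕ} {A : Matrix (Fin m) (Fin 2) ℝ} {i1 i2 : Fin m}
    {A' : Matrix (Fin 2) (Fin 2) ℝ} (hA' : A' = !![A i1 0, A i1 1; A i2 0, A i2 1])
    {b' : Fin 2 → ℝ} {b : Fin m → ℝ} (hb1 : b i1 = b' 0) (hb2 : b i2 = b' 1)
    (hbk : ∀ k, k ≠ i1 → k ≠ i2 → b k = -(d : ℝ) * (|A k 0| + |A k 1|)) (x : Fin 2 → ℤ) :
    Feas d A b x ↔ Feas d A' b' x := by
  refine and_congr_right fun hx => ⟨fun h i => ?_, fun h k => ?_⟩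
  · fin_cases i
    · simpa [hA', Fin.sum_univ_two, hb1] using h i1
    · simpa [hA', Fin.sum_univ_two, hb2] using h i2
  · by_cases h1 : k = i1
    · subst h1
      simpa [hA', Fin.sum_univ_two, hb1] using h 0
    by_cases h2 : k = i2
    · subst h2
      simpa [hA', Fin.sum_univ_two, hb2] using h 1
    rw [hbk k h1 h2, ← Fin.sum_univ_two (fun j => |A k j|)]
    exact neg_mul_sum_abs_le_sum_mul hx (A k)

theorem stmt17_general (d : ℕ) (m : ℕ) (A : Matrix (Fin m) (Fin 2) ℝ)
    (i1 i2 : Fin m)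
    (A' : Matrix (Fin 2) (Fin 2) ℝ)
    (hA' : A' = !![A i1 0, A i1 1; A i2 0, A i2 1])
    (b' : Fin 2 → ℝ) (hb' : ¬ SolConnected d A' b')
    (b : Fin m → ℝ) (hb1 : b i1 = b' 0) (hb2 : b i2 = b' 1)
    (hbk : ∀ k, k ≠ i1 → k ≠ i2 → b k = -(d : ℝ) * (|A k 0| + |A k 1|)) :
    (∀ x : Fin 2 → ℤ, Feas d A b x ↔ Feas d A' b' x) ∧ ¬ SolConnected d A b := by
  have hfeas := feas_iff_feas_of_rows hA' hb1 hb2 hbk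
  exact ⟨hfeas, (solConnected_iff_of_feas_iff hfeas).not.mpr hb'⟩

theorem stmt17 (d : ℕ) (hd : 0 < d) (m : ℕ) (A : Matrix (Fin m) (Fin 2) ℝ)
    (hEO : ¬ HasEO A) (i1 i2 : Fin m)
    (hsgn : ∀ j, Real.sign (A i1 j) = - Real.sign (A i2 j))
    (A' : Matrix (Fin 2) (Fin 2) ℝ)
    (hA' : A' = !![A i1 0, A i1 1; A i2 0, A i2 1])
    (b' : Fin 2 → ℝ) (hb' : ¬ SolConnected d A' b')
    (b : Fin m → ℝ) (hb1 : b i1 = b' 0) (hb2 : b i2 = b' 1)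
    (hbk : ∀ k, k ≠ i1 → k ≠ i2 → b k = -(d : ℝ) * (|A k 0| + |A k 1|)) :
    (∀ x : Fin 2 → ℤ, Feas d A b x ↔ Feas d A' b' x) ∧ ¬ SolConnected d A b :=
  stmt17_general d m A i1 i2 A' hA' b' hb' b hb1 hb2 hbk
end
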